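/- arXiv:1111.3546 — 2 statements merged into one kernel-verified Lean document; each statement's English description precedes it below -/
import Mathlib

section
/- (Core identity of Lemma 2.11, general p.) Extend the bilinear form ℂ-bilinearly to Λ_n ⊗ ℂ. Given v = ∑_{i=1}^{p−1} ξ_i h_i + ∑_{j=1}^{q+r} η_j e_j ∈ Λ_n ⊗ ℂ, define t_0 by r·t_0 = (r−2)ξ_1 + (r−1)∑_{i=2}^{p−1} ξ_i, and t_j = −η_j for 1 ≤ j ≤ q+r. Then for every u = ∑_{i=1}^{p−1} a_i h_i + ∑_{j=1}^{q+r} b_j e_j with u·κ = 0, one has ∑_{i=1}^{p−1} a_i (ξ_1 − ξ_i) + ∑_{j=1}^{q+r} b_j (t_j − t_0) = u·v. -/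
open Finset

/-- Index type for the standard basis of the lattice `Λ_n` (of rank `n+1 = p+q+r-1`):
`Sum.inl i` corresponds to `h_{i+1}` (`0 ≤ i ≤ p-2`) and `Sum.inr j` to `e_{j+1}`
(`0 ≤ j ≤ q+r-1`). -/
abbrev Idx (p q r : ℕ) : Type := Fin (p - 1) ⊕ Fin (q + r)

/-- The Gram matrix of the inner product of `Λ_n` in the standard basis:
`h_i·h_i = r-2`, `h_i·h_j = r-1` (`i ≠ j`), `h_i·e_j = 0`, `e_j·e_j = -1`,
`e_i·e_j = 0` (`i ≠ j`). -/
def gram (p q r : ℕ) : Idx p q r → Idx p q r → ℤ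
  | Sum.inl i, Sum.inl j => if i = j then (r : ℤ) - 2 else (r : ℤ) - 1
  | Sum.inr i, Sum.inr j => if i = j then -1 else 0
  | _, _ => 0

/-- The symmetric bilinear form ("inner product") on `Λ_n ⊗ R`. -/
def bform {R : Type*} [CommRing R] (p q r : ℕ) (x y : Idx p q r → R) : R :=
  ∑ i : Idx p q r, ∑ j : Idx p q r, x i * y j * ((gram p q r i j : ℤ) : R)

/-- The basis vector `h_{i+1}` of `Λ_n`. -/
def hvec (p q r : ℕ) (i : Fin (p - 1)) : Idx p q r → ℤ :=
  fun k => if k = Sum.inl i then 1 else 0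

/-- The basis vector `e_{j+1}` of `Λ_n`. -/
def evec (p q r : ℕ) (j : Fin (q + r)) : Idx p q r → ℤ :=
  fun k => if k = Sum.inr j then 1 else 0

/-- `κ = r·∑ h_i − ((p−1)(r−1)−1)·∑ e_j`. -/
def kappa (p q r : ℕ) : Idx p q r → ℤ :=
  (r : ℤ) • ∑ i, hvec p q r i - (((p : ℤ) - 1) * ((r : ℤ) - 1) - 1) • ∑ j, evec p q r j

lemma bform_add_left {R : Type*} [CommRing R] (p q r : ℕ) (x x' y : Idx p q r → R) :
    bform p q r (x + x') y = bform p q r x y + bform p q r x' y := by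
  simp [bform, add_mul, Finset.sum_add_distrib]

lemma bform_smul_left {R : Type*} [CommRing R] (p q r : ℕ) (c : R) (x y : Idx p q r → R) :
    bform p q r (c • x) y = c * bform p q r x y := by
  unfold bform
  rw [Finset.mul_sum]
  refine Finset.sum_congr rfl fun i _ => ?_
  rw [Finset.mul_sum]
  refine Finset.sum_congr rfl fun j _ => ?_
  simp only [Pi.smul_apply, smul_eq_mul]
  ring

/-- The reflection `r_α : x ↦ x + (x·α)α`, as a `ℤ`-linear endomorphism of `Λ_n`. -/
def reflectL (p q r : ℕ) (α : Idx p q r → ℤ) : Module.End ℤ (Idx p q r → ℤ) where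
  toFun x := x + bform p q r x α • α
  map_add' x y := by
    simp only [bform_add_left, add_smul]
    abel
  map_smul' c x := by
    simp only [bform_smul_left, smul_eq_mul, RingHom.id_apply, mul_smul, smul_add]

/-- The root lattice `L_n = κ^⊥ ∩ Λ_n`, as a `ℤ`-submodule of `Λ_n`. -/
def Lsub (p q r : ℕ) : Submodule ℤ (Idx p q r → ℤ) where
  carrier := { x | bform p q r x (kappa p q r) = 0 }
  add_mem' := by
    intro a b ha hb
    simp only [Set.mem_setOf_eq] at ha hb ⊢
    rw [bform_add_left, ha, hb, add_zero]
  zero_mem' := by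
    simp [Set.mem_setOf_eq, bform]
  smul_mem' := by
    intro c x hx
    simp only [Set.mem_setOf_eq] at hx ⊢
    rw [bform_smul_left, hx, mul_zero]

/-- The simple root `α_0 = h_1 − ∑_{i=1}^{r} e_i`. -/
def alpha0 (p q r : ℕ) : Idx p q r → ℤ
  | Sum.inl i => if (i : ℕ) = 0 then 1 else 0
  | Sum.inr j => if (j : ℕ) < r then -1 else 0

/-- The set of simple roots `β_1, …, β_{p−2}, α_0, α_1, …, α_{q+r−1}`. -/
def simpleRootSet (p q r : ℕ) : Set (Idx p q r → ℤ) :=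
  { α | (∃ i j : Fin (p - 1), (j : ℕ) = (i : ℕ) + 1 ∧ α = -hvec p q r i + hvec p q r j) ∨
        α = alpha0 p q r ∨
        (∃ i j : Fin (q + r), (j : ℕ) = (i : ℕ) + 1 ∧ α = evec p q r i - evec p q r j) }

/-- The Weyl group `W(T_{p,q,r})`, generated by the reflections in the simple roots.
(Each generating reflection is an involution, so this multiplicatively closed set is
in fact a group of automorphisms of `Λ_n`.) -/
def weylGroup (p q r : ℕ) : Submonoid (Module.End ℤ (Idx p q r → ℤ)) :=
  Submonoid.closure { w | ∃ α ∈ simpleRootSet p q r, w = reflectL p q r α }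

/-- The set of roots `Δ_n`: all images of simple roots under elements of the Weyl group. -/
def rootSet (p q r : ℕ) : Set (Idx p q r → ℤ) :=
  { x | ∃ w ∈ weylGroup p q r, ∃ γ ∈ simpleRootSet p q r, x = w γ }

/-- The matrix (over `ℂ`) of the `ℂ`-linear extension of `w` to `Λ_n ⊗ ℂ`. -/
noncomputable def matC (p q r : ℕ) (w : Module.End ℤ (Idx p q r → ℤ)) :
    Matrix (Idx p q r) (Idx p q r) ℂ :=
  (LinearMap.toMatrix' w).map fun a => (a : ℂ)

/-- `ρ` is the spectral radius of (the `ℂ`-linear extension of) `w`: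
the maximum of the absolute values of its eigenvalues. -/
def IsSpectralRadius (p q r : ℕ) (w : Module.End ℤ (Idx p q r → ℤ)) (ρ : ℝ) : Prop :=
  (∃ (μ : ℂ) (v : Idx p q r → ℂ), v ≠ 0 ∧ (matC p q r w).mulVec v = μ • v ∧
      ‖μ‖ = ρ) ∧
  ∀ (μ : ℂ) (v : Idx p q r → ℂ), v ≠ 0 → (matC p q r w).mulVec v = μ • v →
      ‖μ‖ ≤ ρ

/-- `w` is a Coxeter element: a product of the `n` simple reflections,
each occurring exactly once, in some order. -/
def IsCoxeterElement (p q r : ℕ) (w : Module.End ℤ (Idx p q r → ℤ)) : Prop :=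
  ∃ l : List (Idx p q r → ℤ), l.Nodup ∧ (∀ γ, γ ∈ l ↔ γ ∈ simpleRootSet p q r) ∧
    w = (l.map (reflectL p q r)).prod

/-- The simple roots as a family indexed by `Fin (p−2) ⊕ Fin (q+r)`:
`Sum.inl i ↦ β_{i+1}`, `Sum.inr 0 ↦ α_0`, `Sum.inr k ↦ α_k` (`k ≥ 1`). -/
def simpleRoot (p q r : ℕ) : Fin (p - 2) ⊕ Fin (q + r) → (Idx p q r → ℤ)
  | Sum.inl i =>
      -hvec p q r ⟨i.1, by have := i.isLt; omega⟩ +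
        hvec p q r ⟨i.1 + 1, by have := i.isLt; omega⟩
  | Sum.inr k =>
      if (k : ℕ) = 0 then alpha0 p q r
      else evec p q r ⟨k.1 - 1, by have := k.isLt; omega⟩ - evec p q r k

/-- Adjacency in the T-shaped Dynkin diagram `T_{p,q,r}`, in terms of the indexing of
`simpleRoot`: the chain `α_1 — α_2 — ⋯ — α_{q+r−1}`, the edge `α_0 — α_r`, the edge
`α_0 — β_1`, and the chain `β_1 — β_2 — ⋯ — β_{p−2}`. -/
def adjacent (p q r : ℕ) : (Fin (p - 2) ⊕ Fin (q + r)) → (Fin (p - 2) ⊕ Fin (q + r)) → Prop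
  | Sum.inl i, Sum.inl i' => (i' : ℕ) = (i : ℕ) + 1 ∨ (i : ℕ) = (i' : ℕ) + 1
  | Sum.inr k, Sum.inr k' =>
      (1 ≤ (k : ℕ) ∧ (k' : ℕ) = (k : ℕ) + 1) ∨ (1 ≤ (k' : ℕ) ∧ (k : ℕ) = (k' : ℕ) + 1) ∨
      ((k : ℕ) = 0 ∧ (k' : ℕ) = r) ∨ ((k' : ℕ) = 0 ∧ (k : ℕ) = r)
  | Sum.inl i, Sum.inr k => (i : ℕ) = 0 ∧ (k : ℕ) = 0
  | Sum.inr k, Sum.inl i => (i : ℕ) = 0 ∧ (k : ℕ) = 0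

/-- `κ` with real coefficients. -/
def kappaR (p q r : ℕ) : Idx p q r → ℝ := fun k => ((kappa p q r k : ℤ) : ℝ)

/-- `L_n ⊗ ℝ = κ^⊥`, as an `ℝ`-subspace of `Λ_n ⊗ ℝ`. -/
def LsubR (p q r : ℕ) : Submodule ℝ (Idx p q r → ℝ) where
  carrier := { x | bform p q r x (kappaR p q r) = 0 }
  add_mem' := by
    intro a b ha hb
    simp only [Set.mem_setOf_eq] at ha hb ⊢
    rw [bform_add_left, ha, hb, add_zero]
  zero_mem' := by
    simp [Set.mem_setOf_eq, bform]
  smul_mem' := by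
    intro c x hx
    simp only [Set.mem_setOf_eq] at hx ⊢
    rw [bform_smul_left, hx, mul_zero]
section Aux
variable {p q r : ℕ}

lemma bform_eval (p q r : ℕ) (x y : Idx p q r → ℂ) :
    bform p q r x y = ((r:ℂ)-1) * (∑ i, x (Sum.inl i)) * (∑ i, y (Sum.inl i))
      - ∑ i, x (Sum.inl i) * y (Sum.inl i) - ∑ j, x (Sum.inr j) * y (Sum.inr j) := by
  unfold bform
  rw [Fintype.sum_sum_type]
  have h1 : ∀ i : Fin (p-1), (∑ j : Idx p q r,
      x (Sum.inl i) * y j * ((gram p q r (Sum.inl i) j : ℤ) : ℂ)) =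
      ((r:ℂ)-1) * x (Sum.inl i) * (∑ i', y (Sum.inl i')) - x (Sum.inl i) * y (Sum.inl i) := by
    intro i
    rw [Fintype.sum_sum_type]
    have hz : ∀ j : Fin (q+r), x (Sum.inl i) * y (Sum.inr j) *
        ((gram p q r (Sum.inl i) (Sum.inr j) : ℤ) : ℂ) = 0 := by
      intro j; simp [gram]
    rw [Finset.sum_congr rfl (fun j _ => hz j), Finset.sum_const, smul_zero, add_zero]
    have key : ∀ i' : Fin (p-1), x (Sum.inl i) * y (Sum.inl i') *
        ((gram p q r (Sum.inl i) (Sum.inl i') : ℤ) : ℂ) =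
        ((r:ℂ)-1) * (x (Sum.inl i) * y (Sum.inl i'))
        - (if i' = i then x (Sum.inl i) * y (Sum.inl i') else 0) := by
      intro i'; simp only [gram]
      by_cases h : i = i' <;> simp [h, eq_comm, Ne.symm] <;> push_cast <;> ring
    rw [Finset.sum_congr rfl (fun i' _ => key i'), Finset.sum_sub_distrib,
      Finset.sum_ite_eq' _ i, if_pos (Finset.mem_univ i), ← Finset.mul_sum, ← Finset.mul_sum]
    ring
  have h2 : ∀ j : Fin (q+r), (∑ k : Idx p q r,
      x (Sum.inr j) * y k * ((gram p q r (Sum.inr j) k : ℤ) : ℂ)) =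
      - (x (Sum.inr j) * y (Sum.inr j)) := by
    intro j
    rw [Fintype.sum_sum_type]
    have hl : ∀ i : Fin (p-1), x (Sum.inr j) * y (Sum.inl i) *
        ((gram p q r (Sum.inr j) (Sum.inl i) : ℤ) : ℂ) = 0 := by
      intro i; simp [gram]
    rw [Finset.sum_congr rfl (fun i _ => hl i), Finset.sum_const, smul_zero, zero_add]
    have key : ∀ j' : Fin (q+r), x (Sum.inr j) * y (Sum.inr j') *
        ((gram p q r (Sum.inr j) (Sum.inr j') : ℤ) : ℂ) =
        (if j' = j then -(x (Sum.inr j) * y (Sum.inr j')) else 0) := by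
      intro j'; simp only [gram]
      by_cases h : j = j' <;> simp [h, eq_comm]
    rw [Finset.sum_congr rfl (fun j' _ => key j'), Finset.sum_ite_eq' _ j]
    simp
  rw [Finset.sum_congr rfl (fun i _ => h1 i), Finset.sum_congr rfl (fun j _ => h2 j),
    Finset.sum_sub_distrib, Finset.sum_neg_distrib, ← Finset.sum_mul, ← Finset.mul_sum]
  ring

lemma kappa_inl (p q r : ℕ) (i : Fin (p-1)) : kappa p q r (Sum.inl i) = (r : ℤ) := by
  simp [kappa, hvec, evec, Finset.sum_apply]

lemma kappa_inr (p q r : ℕ) (j : Fin (q+r)) :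
    kappa p q r (Sum.inr j) = -(((p:ℤ)-1) * ((r:ℤ)-1) - 1) := by
  simp [kappa, hvec, evec, Finset.sum_apply]

end Aux

/-- core identity of Lemma 2.11, general `p`: for
`v = ∑ ξ_i h_i + ∑ η_j e_j ∈ Λ_n ⊗ ℂ`, set `t_0` with
`r·t_0 = (r−2)ξ_1 + (r−1)·∑_{i=2}^{p−1} ξ_i` and `t_j = −η_j`. Then for every
`u = ∑ a_i h_i + ∑ b_j e_j` with `u·κ = 0` one has
`∑ a_i (ξ_1 − ξ_i) + ∑ b_j (t_j − t_0) = u·v`. -/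
theorem stmt_11 (p q r : ℕ) (hp : 2 ≤ p) (hq : 2 ≤ q) (hr : 3 ≤ r)
    (v : Idx p q r → ℂ) (t0 : ℂ)
    (ht0 : (r : ℂ) * t0 = ((r : ℂ) - 2) * v (Sum.inl ⟨0, by omega⟩) +
      ((r : ℂ) - 1) *
        ∑ i ∈ Finset.univ.filter (fun i : Fin (p - 1) => (i : ℕ) ≠ 0), v (Sum.inl i))
    (u : Idx p q r → ℂ)
    (hu : bform p q r u (fun k => ((kappa p q r k : ℤ) : ℂ)) = 0) :
    ∑ i : Fin (p - 1), u (Sum.inl i) * (v (Sum.inl ⟨0, by omega⟩) - v (Sum.inl i)) +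
      ∑ j : Fin (q + r), u (Sum.inr j) * (-v (Sum.inr j) - t0)
      = bform p q r u v := by
  have hp1 : 1 ≤ p - 1 := by omega
  set Sa := ∑ i : Fin (p-1), u (Sum.inl i) with hSa
  set Sx := ∑ i : Fin (p-1), v (Sum.inl i) with hSx
  set Sb := ∑ j : Fin (q+r), u (Sum.inr j) with hSb
  -- evaluate hu
  rw [bform_eval] at hu
  have hkl : ∀ i : Fin (p-1), ((kappa p q r (Sum.inl i) : ℤ) : ℂ) = (r:ℂ) := by
    intro i; rw [kappa_inl]; norm_cast
  have hkr : ∀ j : Fin (q+r), ((kappa p q r (Sum.inr j) : ℤ) : ℂ)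
      = -(((p:ℂ)-1) * ((r:ℂ)-1) - 1) := by
    intro j; rw [kappa_inr]; push_cast; ring
  simp only [hkl, hkr] at hu
  simp only [← hSa, Finset.sum_const, Finset.card_univ, Fintype.card_fin,
    nsmul_eq_mul, ← Finset.sum_mul, ← hSb] at hu
  have hcard : ((p - 1 : ℕ) : ℂ) = (p:ℂ) - 1 := by
    rw [Nat.cast_sub (by omega : 1 ≤ p)]; norm_num
  rw [hcard] at hu
  have hC : ((p:ℂ)-1) * ((r:ℂ)-1) - 1 ≠ 0 := by
    have hcast : ((p:ℂ)-1) * ((r:ℂ)-1) - 1 = ((((p:ℤ)-1)*((r:ℤ)-1)-1 : ℤ) : ℂ) := by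
      push_cast; ring
    rw [hcast, Int.cast_ne_zero]
    have hp' : (2:ℤ) ≤ (p:ℤ) := by exact_mod_cast hp
    have hr' : (3:ℤ) ≤ (r:ℤ) := by exact_mod_cast hr
    nlinarith
  have hb : Sb = -(r:ℂ) * Sa := by
    have h0 : (((p:ℂ)-1) * ((r:ℂ)-1) - 1) * ((r:ℂ) * Sa + Sb) = 0 := by
      linear_combination hu
    rcases mul_eq_zero.mp h0 with h | h
    · exact absurd h hC
    · linear_combination h
  -- rewrite t0
  have hsplit : Sx = v (Sum.inl ⟨0, by omega⟩) +
      ∑ i ∈ Finset.univ.filter (fun i : Fin (p - 1) => (i : ℕ) ≠ 0), v (Sum.inl i) := by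
    rw [hSx, ← Finset.sum_filter_add_sum_filter_not Finset.univ
      (fun i : Fin (p - 1) => (i : ℕ) = 0)]
    congr 1
    rw [show Finset.univ.filter (fun i : Fin (p - 1) => (i : ℕ) = 0) = {⟨0, by omega⟩} from ?_]
    · simp
    · ext i
      simp [Fin.ext_iff]
  have hT : (r:ℂ) * t0 = ((r:ℂ)-1) * Sx - v (Sum.inl ⟨0, by omega⟩) := by
    rw [ht0, hsplit]; ring
  -- final
  rw [bform_eval]
  have hL1 : ∑ i : Fin (p - 1), u (Sum.inl i) *
      (v (Sum.inl ⟨0, by omega⟩) - v (Sum.inl i)) =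
      Sa * v (Sum.inl ⟨0, by omega⟩) - ∑ i : Fin (p-1), u (Sum.inl i) * v (Sum.inl i) := by
    rw [hSa, Finset.sum_mul, ← Finset.sum_sub_distrib]
    exact Finset.sum_congr rfl fun i _ => by ring
  have hL2 : ∑ j : Fin (q + r), u (Sum.inr j) * (-v (Sum.inr j) - t0) =
      -(∑ j : Fin (q+r), u (Sum.inr j) * v (Sum.inr j)) - Sb * t0 := by
    rw [hSb, Finset.sum_mul, ← Finset.sum_neg_distrib, ← Finset.sum_sub_distrib]
    exact Finset.sum_congr rfl fun j _ => by ring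
  rw [hL1, hL2]
  linear_combination (-t0) * hb + Sa * hT
end

section
/- (Proposition 2.4(2).) Let w ∈ W(T_{p,q,r}) have no periodic roots, i.e. there is no root α ∈ Δ_n and no integer k ≥ 1 with w^k(α) = α. Let v ∈ Λ_n ⊗ ℂ be an eigenvector of (the ℂ-linear extension of) w with eigenvalue λ, where λ is not a root of unity. Then α·v ≠ 0 for every root α ∈ Δ_n. -/
open Finset

/-! ### Auxiliary development -/

open Matrix

/-- indicator of `h`-coordinates -/
def hInd (p q r : ℕ) : Idx p q r → ℤ := Sum.elim (fun _ => 1) (fun _ => 0)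

lemma gram_eq {p q r : ℕ} (a b : Idx p q r) :
    gram p q r a b = ((r : ℤ) - 1) * hInd p q r a * hInd p q r b -
      (if a = b then 1 else 0) := by
  rcases a with i | i <;> rcases b with j | j <;>
    simp only [_root_.gram, hInd, Sum.elim_inl, Sum.elim_inr, Sum.inl.injEq, Sum.inr.injEq,
      mul_one, mul_zero, zero_sub, sub_zero, one_mul, zero_mul,
      reduceCtorEq, if_false] <;> split <;> ring

/-- `h`-coordinate sum -/
def sH (p q r : ℕ) {R : Type*} [CommRing R] (x : Idx p q r → R) : R :=
  ∑ i : Fin (p - 1), x (Sum.inl i)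

/-- Euclidean dot product -/
def dotP (p q r : ℕ) {R : Type*} [CommRing R] (x y : Idx p q r → R) : R :=
  ∑ k : Idx p q r, x k * y k

section Aux

variable {R : Type*} [CommRing R] {p q r : ℕ}

lemma sH_eq (x : Idx p q r → R) :
    ∑ a : Idx p q r, x a * ((hInd p q r a : ℤ) : R) = sH p q r x := by
  rw [Fintype.sum_sum_type]
  simp [hInd, sH]

lemma bform_eq (x y : Idx p q r → R) :
    bform p q r x y = ((r : R) - 1) * sH p q r x * sH p q r y - dotP p q r x y := by
  unfold bform
  have key : ∀ a b : Idx p q r, ((gram p q r a b : ℤ) : R) =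
      ((r : R) - 1) * ((hInd p q r a : ℤ) : R) * ((hInd p q r b : ℤ) : R) -
        (if a = b then 1 else 0) := by
    intro a b
    rw [gram_eq]
    push_cast
    split <;> simp
  calc ∑ a : Idx p q r, ∑ b : Idx p q r, x a * y b * ((gram p q r a b : ℤ) : R)
      = ∑ a : Idx p q r, ∑ b : Idx p q r,
          (((r : R) - 1) * ((x a * ((hInd p q r a : ℤ) : R)) * (y b * ((hInd p q r b : ℤ) : R)))
            - x a * y b * (if a = b then 1 else 0)) := by
        refine Finset.sum_congr rfl fun a _ => Finset.sum_congr rfl fun b _ => ?_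
        rw [key]; ring
    _ = ((r : R) - 1) * sH p q r x * sH p q r y - dotP p q r x y := by
        simp only [Finset.sum_sub_distrib]
        congr 1
        · rw [← sH_eq x, ← sH_eq y, mul_assoc, Finset.sum_mul_sum]
          simp only [Finset.mul_sum]
        · rw [dotP]
          refine Finset.sum_congr rfl fun a _ => ?_
          rw [Finset.sum_eq_single a]
          · simp
          · intro b _ hb; simp [Ne.symm hb]
          · intro h; exact absurd (Finset.mem_univ a) h

lemma bform_symm (x y : Idx p q r → R) : bform p q r x y = bform p q r y x := by
  rw [bform_eq, bform_eq, dotP, dotP]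
  have : ∑ k : Idx p q r, x k * y k = ∑ k : Idx p q r, y k * x k := by
    exact Finset.sum_congr rfl fun k _ => mul_comm _ _
  rw [this]; ring

lemma bform_add_right (x y y' : Idx p q r → R) :
    bform p q r x (y + y') = bform p q r x y + bform p q r x y' := by
  rw [bform_symm, bform_add_left, bform_symm y x, bform_symm y' x]

lemma bform_smul_right (c : R) (x y : Idx p q r → R) :
    bform p q r x (c • y) = c * bform p q r x y := by
  rw [bform_symm, bform_smul_left, bform_symm]

lemma bform_sub_left (x x' y : Idx p q r → R) :
    bform p q r (x - x') y = bform p q r x y - bform p q r x' y := by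
  have := bform_add_left p q r (x - x') x' y
  rw [sub_add_cancel] at this
  rw [this]; ring

lemma bform_sub_right (x y y' : Idx p q r → R) :
    bform p q r x (y - y') = bform p q r x y - bform p q r x y' := by
  rw [bform_symm, bform_sub_left, bform_symm y x, bform_symm y' x]

end Aux

section SecB

variable {p q r : ℕ}

lemma sum_ind_lt (q r : ℕ) :
    (∑ j : Fin (q + r), if (j : ℕ) < r then (1 : ℤ) else 0) = r := by
  rw [Fin.sum_univ_eq_sum_range (fun n => if n < r then (1 : ℤ) else 0)]
  rw [← Finset.sum_subset (Finset.range_subset_range.mpr (Nat.le_add_left r q))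
      (fun x _ hx => if_neg (by simp only [Finset.mem_range] at hx; omega))]
  rw [Finset.sum_congr rfl (fun x hx => if_pos (Finset.mem_range.mp hx))]
  simp

lemma bform_simple (hp : 2 ≤ p) (hq : 2 ≤ q) (hr : 3 ≤ r)
    {γ : Idx p q r → ℤ} (hγ : γ ∈ simpleRootSet p q r) :
    bform p q r γ γ = -2 := by
  rcases hγ with ⟨i, j, hij, rfl⟩ | rfl | ⟨i, j, hij, rfl⟩
  · have hne : j ≠ i := by intro h; subst h; omega
    rw [bform_eq]
    have hs : sH p q r (-hvec p q r i + hvec p q r j) = 0 := by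
      simp [sH, hvec, Finset.sum_add_distrib, Finset.sum_ite_eq', hne]
    have hd : dotP p q r (-hvec p q r i + hvec p q r j)
        (-hvec p q r i + hvec p q r j) = 2 := by
      unfold dotP hvec
      rw [Fintype.sum_sum_type]
      simp only [Pi.add_apply, Pi.neg_apply]
      have h2 : ∀ k : Fin (q + r),
          ((-(if (Sum.inr k : Idx p q r) = Sum.inl i then (1:ℤ) else 0) +
            (if (Sum.inr k : Idx p q r) = Sum.inl j then (1:ℤ) else 0)) *
           (-(if (Sum.inr k : Idx p q r) = Sum.inl i then (1:ℤ) else 0) +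
            (if (Sum.inr k : Idx p q r) = Sum.inl j then (1:ℤ) else 0))) = 0 := by
        intro k; simp
      rw [Finset.sum_congr rfl (fun k _ => h2 k)]
      simp only [Pi.add_apply, Pi.neg_apply, Finset.sum_const_zero, add_zero]
      have h1 : ∀ t : Fin (p - 1),
          ((-(if (Sum.inl t : Idx p q r) = Sum.inl i then (1:ℤ) else 0) +
            (if (Sum.inl t : Idx p q r) = Sum.inl j then (1:ℤ) else 0)) *
           (-(if (Sum.inl t : Idx p q r) = Sum.inl i then (1:ℤ) else 0) +
            (if (Sum.inl t : Idx p q r) = Sum.inl j then (1:ℤ) else 0))) =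
          (if t = i then (1:ℤ) else 0) + (if t = j then (1:ℤ) else 0) := by
        intro t
        by_cases h1 : t = i <;> by_cases h2 : t = j
        · exact absurd (h1.symm.trans h2).symm hne
        · simp [h1, h2, hne, Ne.symm hne]
        · simp [h1, h2, hne, Ne.symm hne]
        · simp [h1, h2, hne, Ne.symm hne]
      rw [Finset.sum_congr rfl (fun t _ => h1 t)]
      rw [Finset.sum_add_distrib]
      simp [Finset.sum_ite_eq']
    rw [hs, hd]; ring
  · rw [bform_eq]
    have h0 : (0 : ℕ) < p - 1 := by omega
    have hs : sH p q r (alpha0 p q r) = 1 := by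
      unfold sH alpha0
      have : ∀ t : Fin (p - 1), (if (t : ℕ) = 0 then (1:ℤ) else 0) =
          (if t = (⟨0, h0⟩ : Fin (p - 1)) then (1:ℤ) else 0) := by
        intro t
        congr 1
        simp [Fin.ext_iff]
      rw [Finset.sum_congr rfl (fun t _ => this t), Finset.sum_ite_eq']
      simp
    have hd : dotP p q r (alpha0 p q r) (alpha0 p q r) = 1 + r := by
      unfold dotP alpha0
      rw [Fintype.sum_sum_type]
      have h1 : ∀ t : Fin (p - 1),
          ((if (t : ℕ) = 0 then (1:ℤ) else 0) * (if (t : ℕ) = 0 then (1:ℤ) else 0)) =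
          (if t = (⟨0, h0⟩ : Fin (p - 1)) then (1:ℤ) else 0) := by
        intro t; by_cases h : (t : ℕ) = 0 <;> simp [h, Fin.ext_iff]
      have h2 : ∀ k : Fin (q + r),
          ((if (k : ℕ) < r then (-1:ℤ) else 0) * (if (k : ℕ) < r then (-1:ℤ) else 0)) =
          (if (k : ℕ) < r then (1:ℤ) else 0) := by
        intro k; by_cases h : (k : ℕ) < r <;> simp [h]
      rw [Finset.sum_congr rfl (fun t _ => h1 t), Finset.sum_congr rfl (fun k _ => h2 k)]
      rw [Finset.sum_ite_eq', sum_ind_lt q r]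
      simp
    rw [hs, hd]
    push_cast
    ring
  · have hne : j ≠ i := by intro h; subst h; omega
    rw [bform_eq]
    have hs : sH p q r (evec p q r i - evec p q r j) = 0 := by
      simp [sH, evec]
    have hd : dotP p q r (evec p q r i - evec p q r j)
        (evec p q r i - evec p q r j) = 2 := by
      unfold dotP evec
      rw [Fintype.sum_sum_type]
      simp only [Pi.sub_apply]
      have h2 : ∀ t : Fin (p - 1),
          (((if (Sum.inl t : Idx p q r) = Sum.inr i then (1:ℤ) else 0) -
            (if (Sum.inl t : Idx p q r) = Sum.inr j then (1:ℤ) else 0)) *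
           ((if (Sum.inl t : Idx p q r) = Sum.inr i then (1:ℤ) else 0) -
            (if (Sum.inl t : Idx p q r) = Sum.inr j then (1:ℤ) else 0))) = 0 := by
        intro t; simp
      rw [Finset.sum_congr rfl (fun t _ => h2 t)]
      have h1 : ∀ k : Fin (q + r),
          (((if (Sum.inr k : Idx p q r) = Sum.inr i then (1:ℤ) else 0) -
            (if (Sum.inr k : Idx p q r) = Sum.inr j then (1:ℤ) else 0)) *
           ((if (Sum.inr k : Idx p q r) = Sum.inr i then (1:ℤ) else 0) -
            (if (Sum.inr k : Idx p q r) = Sum.inr j then (1:ℤ) else 0))) =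
          (if k = i then (1:ℤ) else 0) + (if k = j then (1:ℤ) else 0) := by
        intro k
        by_cases h1 : k = i <;> by_cases h2 : k = j
        · exact absurd (h1.symm.trans h2).symm hne
        · simp [h1, h2, hne, Ne.symm hne]
        · simp [h1, h2, hne, Ne.symm hne]
        · simp [h1, h2, hne, Ne.symm hne]
      rw [Finset.sum_congr rfl (fun k _ => h1 k)]
      rw [Finset.sum_add_distrib]
      simp [Finset.sum_ite_eq', Pi.sub_apply]
    rw [hs, hd]; ring

lemma reflectL_apply (γ x : Idx p q r → ℤ) :
    reflectL p q r γ x = x + bform p q r x γ • γ := rfl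

lemma bform_reflect {γ : Idx p q r → ℤ} (hγ : bform p q r γ γ = -2)
    (x y : Idx p q r → ℤ) :
    bform p q r (reflectL p q r γ x) (reflectL p q r γ y) = bform p q r x y := by
  simp only [reflectL_apply, bform_add_left, bform_add_right, bform_smul_left,
    bform_smul_right]
  rw [hγ, bform_symm γ y]
  ring

lemma reflect_invol {γ : Idx p q r → ℤ} (hγ : bform p q r γ γ = -2)
    (x : Idx p q r → ℤ) :
    reflectL p q r γ (reflectL p q r γ x) = x := by
  rw [reflectL_apply, reflectL_apply, bform_add_left, bform_smul_left, hγ]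
  ext k
  simp only [Pi.add_apply, Pi.smul_apply, smul_eq_mul]
  ring

lemma weyl_bform_invariant (hp : 2 ≤ p) (hq : 2 ≤ q) (hr : 3 ≤ r)
    {w : Module.End ℤ (Idx p q r → ℤ)} (hw : w ∈ weylGroup p q r)
    (x y : Idx p q r → ℤ) :
    bform p q r (w x) (w y) = bform p q r x y := by
  induction hw using Submonoid.closure_induction generalizing x y with
  | mem w' hw' =>
      obtain ⟨γ, hγ, rfl⟩ := hw'
      exact bform_reflect (bform_simple hp hq hr hγ) x y
  | one => simp
  | mul a b ha hb iha ihb =>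
      rw [Module.End.mul_apply, Module.End.mul_apply, iha, ihb]

lemma weyl_inverse (hp : 2 ≤ p) (hq : 2 ≤ q) (hr : 3 ≤ r)
    {w : Module.End ℤ (Idx p q r → ℤ)} (hw : w ∈ weylGroup p q r) :
    ∃ w' ∈ weylGroup p q r, w * w' = 1 ∧ w' * w = 1 := by
  induction hw using Submonoid.closure_induction with
  | mem w' hw' =>
      obtain ⟨γ, hγ, rfl⟩ := hw'
      refine ⟨reflectL p q r γ, Submonoid.subset_closure ⟨γ, hγ, rfl⟩, ?_, ?_⟩ <;>
      · apply LinearMap.ext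
        intro x
        simp only [Module.End.mul_apply, Module.End.one_apply]
        exact reflect_invol (bform_simple hp hq hr hγ) x
  | one => exact ⟨1, one_mem _, by simp, by simp⟩
  | mul a b ha hb iha ihb =>
      obtain ⟨a', ha', haa, haa'⟩ := iha
      obtain ⟨b', hb', hbb, hbb'⟩ := ihb
      refine ⟨b' * a', mul_mem hb' ha', ?_, ?_⟩
      · rw [mul_assoc, ← mul_assoc b b' a', hbb, one_mul, haa]
      · rw [mul_assoc, ← mul_assoc a' a b, haa', one_mul, hbb']

lemma root_bform_self (hp : 2 ≤ p) (hq : 2 ≤ q) (hr : 3 ≤ r)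
    {α : Idx p q r → ℤ} (hα : α ∈ rootSet p q r) :
    bform p q r α α = -2 := by
  obtain ⟨w, hw, γ, hγ, rfl⟩ := hα
  rw [weyl_bform_invariant hp hq hr hw]
  exact bform_simple hp hq hr hγ

lemma rootSet_w_mem {w : Module.End ℤ (Idx p q r → ℤ)} (hw : w ∈ weylGroup p q r)
    {α : Idx p q r → ℤ} (hα : α ∈ rootSet p q r) :
    w α ∈ rootSet p q r := by
  obtain ⟨w', hw', γ, hγ, rfl⟩ := hα
  exact ⟨w * w', mul_mem hw hw', γ, hγ, by simp [Module.End.mul_apply]⟩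

end SecB

section SecC

variable {R : Type*} [CommRing R] {p q r : ℕ}

/-- the matrix of `w` with entries cast into `R` -/
def matn (R : Type*) [CommRing R] (p q r : ℕ) (w : Module.End ℤ (Idx p q r → ℤ)) :
    Matrix (Idx p q r) (Idx p q r) R :=
  (LinearMap.toMatrix' w).map fun a => ((a : ℤ) : R)

lemma matC_eq_matn (w : Module.End ℤ (Idx p q r → ℤ)) :
    matC p q r w = matn ℂ p q r w := rfl

lemma matn_map_eq (w : Module.End ℤ (Idx p q r → ℤ)) :
    matn R p q r w = (LinearMap.toMatrix' w).map (Int.castRingHom R) := rfl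

lemma matn_mul (w w' : Module.End ℤ (Idx p q r → ℤ)) :
    matn R p q r (w * w') = matn R p q r w * matn R p q r w' := by
  rw [matn_map_eq, matn_map_eq, matn_map_eq, Module.End.mul_eq_comp,
    LinearMap.toMatrix'_comp, Matrix.map_mul]

lemma matn_one : matn R p q r 1 = 1 := by
  rw [matn_map_eq]
  have : LinearMap.toMatrix' (1 : Module.End ℤ (Idx p q r → ℤ)) = 1 := by
    simp
  rw [this]
  exact Matrix.map_one _ (by simp) (by simp)

lemma matn_pow (w : Module.End ℤ (Idx p q r → ℤ)) (k : ℕ) :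
    matn R p q r (w ^ k) = (matn R p q r w) ^ k := by
  induction k with
  | zero => simpa using matn_one
  | succ k ih => rw [pow_succ, pow_succ, matn_mul, ih]

lemma intCast_vec_mulVec (w : Module.End ℤ (Idx p q r → ℤ)) (x : Idx p q r → ℤ) :
    (matn R p q r w).mulVec (fun k => ((x k : ℤ) : R)) = fun k => ((w x k : ℤ) : R) := by
  funext k
  have hZ : (LinearMap.toMatrix' w).mulVec x = w x := by
    rw [← Matrix.toLin'_apply, Matrix.toLin'_toMatrix']
  rw [← hZ]
  simp only [Matrix.mulVec, dotProduct, matn, Matrix.map_apply]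
  push_cast
  rfl

lemma bform_zero_left (y : Idx p q r → R) : bform p q r 0 y = 0 := by
  simp [bform]

lemma bform_sum_left {ι : Type*} (s : Finset ι) (f : ι → Idx p q r → R) (y : Idx p q r → R) :
    bform p q r (∑ i ∈ s, f i) y = ∑ i ∈ s, bform p q r (f i) y := by
  induction s using Finset.cons_induction with
  | empty => simpa using bform_zero_left y
  | cons a s ha ih =>
      rw [Finset.sum_cons, Finset.sum_cons, bform_add_left, ih]

lemma bform_intCast (x y : Idx p q r → ℤ) :
    bform p q r (fun k => ((x k : ℤ) : R)) (fun k => ((y k : ℤ) : R)) =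
      ((bform p q r x y : ℤ) : R) := by
  unfold bform
  push_cast
  rfl

lemma bform_single (i j : Idx p q r) :
    bform p q r (Pi.single i (1 : ℤ)) (Pi.single j 1) = gram p q r i j := by
  unfold bform
  rw [Finset.sum_eq_single i]
  · rw [Finset.sum_eq_single j]
    · simp
    · intro b _ hb; simp [Pi.single_apply, hb]
    · intro h; exact absurd (Finset.mem_univ j) h
  · intro a _ ha
    rw [Finset.sum_eq_single j]
    · simp [Pi.single_apply, ha]
    · intro b _ hb; simp [Pi.single_apply, hb]
    · intro h; exact absurd (Finset.mem_univ j) h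
  · intro h; exact absurd (Finset.mem_univ i) h

lemma mulVec_eq_sum_cols (M : Matrix (Idx p q r) (Idx p q r) R) (x : Idx p q r → R) :
    M.mulVec x = ∑ i : Idx p q r, x i • (fun k => M k i) := by
  funext k
  rw [Finset.sum_apply]
  simp only [Pi.smul_apply, smul_eq_mul]
  simp [Matrix.mulVec, dotProduct, mul_comm]

lemma weyl_matn_invariant (hp : 2 ≤ p) (hq : 2 ≤ q) (hr : 3 ≤ r)
    {w : Module.End ℤ (Idx p q r → ℤ)} (hw : w ∈ weylGroup p q r)
    (x y : Idx p q r → R) :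
    bform p q r ((matn R p q r w).mulVec x) ((matn R p q r w).mulVec y) =
      bform p q r x y := by
  have key : ∀ i j : Idx p q r,
      bform p q r (fun k => ((w (Pi.single i 1) k : ℤ) : R))
        (fun k => ((w (Pi.single j 1) k : ℤ) : R)) = ((gram p q r i j : ℤ) : R) := by
    intro i j
    rw [bform_intCast, weyl_bform_invariant hp hq hr hw, bform_single]
  have hcol : ∀ i : Idx p q r,
      (fun k => matn R p q r w k i) = fun k => ((w (Pi.single i 1) k : ℤ) : R) := by
    intro i
    funext k
    simp only [matn, Matrix.map_apply, LinearMap.toMatrix'_apply]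
  rw [mulVec_eq_sum_cols, mulVec_eq_sum_cols, bform_sum_left]
  have : ∀ i : Idx p q r,
      bform p q r (x i • fun k => matn R p q r w k i)
        (∑ j : Idx p q r, y j • fun k => matn R p q r w k j) =
      ∑ j : Idx p q r, x i * y j * ((gram p q r i j : ℤ) : R) := by
    intro i
    rw [bform_symm, bform_sum_left]
    refine Finset.sum_congr rfl fun j _ => ?_
    rw [bform_smul_left, bform_smul_right, bform_symm, hcol i, hcol j, key i j]
    ring
  rw [Finset.sum_congr rfl (fun i _ => this i)]
  rfl

end SecC

section SecD

variable {p q r : ℕ}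

lemma dotP_self_nonneg (x : Idx p q r → ℝ) : 0 ≤ dotP p q r x x :=
  Finset.sum_nonneg fun k _ => mul_self_nonneg _

lemma dotP_self_pos {x : Idx p q r → ℝ} (hx : x ≠ 0) : 0 < dotP p q r x x := by
  obtain ⟨k, hk⟩ : ∃ k, x k ≠ 0 := by
    by_contra h
    push_neg at h
    exact hx (funext h)
  exact Finset.sum_pos' (fun i _ => mul_self_nonneg _)
    ⟨k, Finset.mem_univ k, mul_self_pos.mpr hk⟩

lemma dotP_eq_zero {x : Idx p q r → ℝ} (hx : dotP p q r x x = 0) : x = 0 := by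
  by_contra h
  exact absurd hx (ne_of_gt (dotP_self_pos h))

lemma dotP_sq_le (x y : Idx p q r → ℝ) :
    (dotP p q r x y) ^ 2 ≤ dotP p q r x x * dotP p q r y y := by
  have := Finset.sum_mul_sq_le_sq_mul_sq (Finset.univ : Finset (Idx p q r)) x y
  unfold dotP
  calc (∑ k : Idx p q r, x k * y k) ^ 2 ≤ (∑ k : Idx p q r, x k ^ 2) * ∑ k : Idx p q r, y k ^ 2 := this
    _ = (∑ k : Idx p q r, x k * x k) * ∑ k : Idx p q r, y k * y k := by
        simp [sq]

lemma rone_pos (hr : 3 ≤ r) : (2 : ℝ) ≤ (r : ℝ) - 1 := by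
  have : (3 : ℝ) ≤ (r : ℝ) := by exact_mod_cast hr
  linarith

/-- a positive vector has negative-definite orthogonal complement -/
lemma bform_neg_of_ortho_pos (hr : 3 ≤ r) {t z : Idx p q r → ℝ}
    (ht : 0 < bform p q r t t) (htz : bform p q r t z = 0) (hz : z ≠ 0) :
    bform p q r z z < 0 := by
  rw [bform_eq] at ht htz ⊢
  set R1 := (r : ℝ) - 1 with hR1
  have hR1pos : 0 < R1 := by have := rone_pos hr; linarith
  set a := sH p q r t
  set b := sH p q r z
  set T := dotP p q r t t with hT
  set Z := dotP p q r z z with hZ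
  set P := dotP p q r t z with hP
  have hTnn : 0 ≤ T := dotP_self_nonneg t
  have hZpos : 0 < Z := dotP_self_pos hz
  have hCS : P ^ 2 ≤ T * Z := dotP_sq_le t z
  have ha2 : 0 < R1 * (a * a) := by nlinarith
  have hPval : P = R1 * a * b := by linarith
  have hsq : P ^ 2 = (R1 * (a * a)) * (R1 * (b * b)) := by rw [hPval]; ring
  by_contra hge
  push_neg at hge
  have hge' : Z ≤ R1 * (b * b) := by nlinarith [hge]
  have h3 : T * Z < (R1 * (a * a)) * Z := by nlinarith
  have h4 : (R1 * (a * a)) * Z ≤ (R1 * (a * a)) * (R1 * (b * b)) :=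
    mul_le_mul_of_nonneg_left hge' (le_of_lt ha2)
  linarith

lemma sH_sub_smul (x y : Idx p q r → ℝ) (c : ℝ) :
    sH p q r (y - c • x) = sH p q r y - c * sH p q r x := by
  unfold sH
  simp only [Pi.sub_apply, Pi.smul_apply, smul_eq_mul]
  rw [Finset.sum_sub_distrib, Finset.mul_sum]

/-- two orthogonal isotropic vectors are proportional -/
lemma iso_pair_dependent (hr : 3 ≤ r) {x y : Idx p q r → ℝ}
    (hxx : bform p q r x x = 0) (hxy : bform p q r x y = 0)
    (hyy : bform p q r y y = 0) (hx : x ≠ 0) :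
    ∃ c : ℝ, y = c • x := by
  have hR1pos : 0 < (r : ℝ) - 1 := by have := rone_pos hr; linarith
  have ha : sH p q r x ≠ 0 := by
    intro h
    rw [bform_eq, h] at hxx
    have : dotP p q r x x = 0 := by linarith [hxx]
    exact hx (dotP_eq_zero this)
  refine ⟨sH p q r y / sH p q r x, ?_⟩
  set c := sH p q r y / sH p q r x with hc
  set z := y - c • x with hzdef
  have hsz : sH p q r z = 0 := by
    rw [hzdef, sH_sub_smul, hc]
    field_simp
    ring
  have hbzz : bform p q r z z = 0 := by
    rw [hzdef, bform_sub_left, bform_sub_right, bform_sub_right, bform_smul_left,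
      bform_smul_right, bform_smul_left, bform_smul_right, bform_symm y x, hxx, hxy, hyy]
    ring
  have : dotP p q r z z = 0 := by
    rw [bform_eq, hsz] at hbzz
    linarith [hbzz]
  have hz0 : z = 0 := dotP_eq_zero this
  have hy : y - c • x = 0 := by rw [← hzdef]; exact hz0
  exact sub_eq_zero.mp hy

/-- the orthogonal complement of a nonzero isotropic vector is negative semidefinite -/
lemma bform_nonpos_of_ortho_iso (hr : 3 ≤ r) {u z : Idx p q r → ℝ}
    (hu : u ≠ 0) (huu : bform p q r u u = 0) (hzu : bform p q r z u = 0) :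
    bform p q r z z ≤ 0 := by
  by_contra h
  push_neg at h
  have := bform_neg_of_ortho_pos hr h hzu hu
  linarith [huu, this]

end SecD

section SecE

variable {p q r : ℕ}

lemma dotP_sub_left (x x' y : Idx p q r → ℝ) :
    dotP p q r (x - x') y = dotP p q r x y - dotP p q r x' y := by
  unfold dotP
  simp only [Pi.sub_apply, sub_mul]
  rw [Finset.sum_sub_distrib]

lemma dotP_smul_left (c : ℝ) (x y : Idx p q r → ℝ) :
    dotP p q r (c • x) y = c * dotP p q r x y := by
  unfold dotP
  simp only [Pi.smul_apply, smul_eq_mul, Finset.mul_sum]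
  exact Finset.sum_congr rfl fun k _ => by ring

lemma dotP_add_left (x x' y : Idx p q r → ℝ) :
    dotP p q r (x + x') y = dotP p q r x y + dotP p q r x' y := by
  unfold dotP
  simp only [Pi.add_apply, add_mul]
  rw [Finset.sum_add_distrib]

lemma dotP_symm (x y : Idx p q r → ℝ) : dotP p q r x y = dotP p q r y x := by
  unfold dotP
  exact Finset.sum_congr rfl fun k _ => mul_comm _ _

lemma dotP_smul_right (c : ℝ) (x y : Idx p q r → ℝ) :
    dotP p q r x (c • y) = c * dotP p q r x y := by
  rw [dotP_symm, dotP_smul_left, dotP_symm]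

lemma sq_coord_le_dotP (z : Idx p q r → ℝ) (i : Idx p q r) :
    z i * z i ≤ dotP p q r z z :=
  Finset.single_le_sum (fun k _ => mul_self_nonneg (z k)) (Finset.mem_univ i)

/-- row-wise Cauchy-Schwarz bound for `mulVec` -/
lemma dotP_mulVec_le (M : Matrix (Idx p q r) (Idx p q r) ℝ) (z : Idx p q r → ℝ) :
    dotP p q r (M.mulVec z) (M.mulVec z) ≤
      (∑ k : Idx p q r, ∑ i : Idx p q r, (M k i) ^ 2) * dotP p q r z z := by
  unfold dotP
  have key : ∀ k : Idx p q r, (M.mulVec z k) * (M.mulVec z k) ≤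
      (∑ i : Idx p q r, (M k i) ^ 2) * (∑ i : Idx p q r, z i * z i) := by
    intro k
    have hcs := Finset.sum_mul_sq_le_sq_mul_sq (Finset.univ : Finset (Idx p q r))
      (fun i => M k i) (fun i => z i)
    have h2 : (∑ i : Idx p q r, (z i) ^ 2) = ∑ i : Idx p q r, z i * z i := by simp [sq]
    calc M.mulVec z k * M.mulVec z k
        = (∑ i : Idx p q r, M k i * z i) ^ 2 := by
          simp [Matrix.mulVec, dotProduct, sq]
      _ ≤ (∑ i : Idx p q r, (M k i) ^ 2) * (∑ i : Idx p q r, (z i) ^ 2) := hcs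
      _ = (∑ i : Idx p q r, (M k i) ^ 2) * (∑ i : Idx p q r, z i * z i) := by rw [h2]
  calc ∑ k : Idx p q r, M.mulVec z k * M.mulVec z k
      ≤ ∑ k : Idx p q r, (∑ i : Idx p q r, (M k i) ^ 2) * (∑ i : Idx p q r, z i * z i) :=
        Finset.sum_le_sum fun k _ => key k
    _ = (∑ k : Idx p q r, ∑ i : Idx p q r, (M k i) ^ 2) * ∑ i : Idx p q r, z i * z i := by
        rw [← Finset.sum_mul]

lemma continuous_bform_left (u : Idx p q r → ℝ) :
    Continuous fun z : Idx p q r → ℝ => bform p q r z u := by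
  unfold bform
  refine continuous_finset_sum _ fun a _ => continuous_finset_sum _ fun b _ => ?_
  exact ((continuous_apply a).mul continuous_const).mul continuous_const

lemma continuous_dotP_right (u : Idx p q r → ℝ) :
    Continuous fun z : Idx p q r → ℝ => dotP p q r z u := by
  unfold dotP
  exact continuous_finset_sum _ fun k _ => (continuous_apply k).mul continuous_const

lemma continuous_dotP_self :
    Continuous fun z : Idx p q r → ℝ => dotP p q r z z := by
  unfold dotP
  exact continuous_finset_sum _ fun k _ => (continuous_apply k).mul (continuous_apply k)

lemma continuous_bform_self :
    Continuous fun z : Idx p q r → ℝ => bform p q r z z := by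
  unfold bform
  refine continuous_finset_sum _ fun a _ => continuous_finset_sum _ fun b _ => ?_
  exact ((continuous_apply a).mul (continuous_apply b)).mul continuous_const

/-- coercivity of `-bform` on the subspace orthogonal (in both senses) to `u`,
given a nonempty witness sphere -/
lemma coercivity (hr : 3 ≤ r) (u : Idx p q r → ℝ) (hu : u ≠ 0)
    (huu : bform p q r u u = 0)
    (d₀ : Idx p q r → ℝ) (hd₀ : d₀ ≠ 0)
    (h₀b : bform p q r d₀ u = 0) (h₀e : dotP p q r d₀ u = 0) :
    ∃ ε > 0, ∀ z : Idx p q r → ℝ, bform p q r z u = 0 → dotP p q r z u = 0 →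
      ε * dotP p q r z z ≤ - bform p q r z z := by
  classical
  set S : Set (Idx p q r → ℝ) :=
    {z | dotP p q r z z = 1 ∧ bform p q r z u = 0 ∧ dotP p q r z u = 0} with hS
  -- scaling map
  have hscale : ∀ z : Idx p q r → ℝ, z ≠ 0 → bform p q r z u = 0 → dotP p q r z u = 0 →
      ((Real.sqrt (dotP p q r z z))⁻¹ • z) ∈ S := by
    intro z hz hb he
    have hpos := dotP_self_pos hz
    have hsq : Real.sqrt (dotP p q r z z) ^ 2 = dotP p q r z z := Real.sq_sqrt (le_of_lt hpos)
    have hsqrtpos : 0 < Real.sqrt (dotP p q r z z) := Real.sqrt_pos.mpr hpos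
    refine ⟨?_, ?_, ?_⟩
    · have hsq2 : ((Real.sqrt (dotP p q r z z))⁻¹) ^ 2 = (dotP p q r z z)⁻¹ := by
        rw [← Real.sqrt_inv]
        exact Real.sq_sqrt (by positivity)
      rw [dotP_smul_left, dotP_smul_right, ← mul_assoc, ← sq, hsq2,
        inv_mul_cancel₀ (ne_of_gt hpos)]
    · rw [bform_smul_left, hb, mul_zero]
    · rw [dotP_smul_left, he, mul_zero]
  have hSne : S.Nonempty := ⟨_, hscale d₀ hd₀ h₀b h₀e⟩
  have hclosed : IsClosed S := by
    rw [hS]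
    have : {z : Idx p q r → ℝ | dotP p q r z z = 1 ∧ bform p q r z u = 0 ∧ dotP p q r z u = 0}
        = (fun z => dotP p q r z z) ⁻¹' {1} ∩
          ((fun z => bform p q r z u) ⁻¹' {0} ∩ (fun z => dotP p q r z u) ⁻¹' {0}) := by
      ext z; simp [Set.mem_preimage]
    rw [this]
    exact ((isClosed_singleton.preimage continuous_dotP_self).inter
      ((isClosed_singleton.preimage (continuous_bform_left u)).inter
        (isClosed_singleton.preimage (continuous_dotP_right u))))
  have hbdd : Bornology.IsBounded S := by
    refine (Metric.isBounded_closedBall (x := (0 : Idx p q r → ℝ)) (r := 1)).subset ?_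
    intro z hz
    rw [Metric.mem_closedBall, dist_zero_right]
    refine (pi_norm_le_iff_of_nonneg (by norm_num)).mpr fun i => ?_
    have h1 : z i * z i ≤ 1 := by
      have := sq_coord_le_dotP z i
      rw [hz.1] at this
      exact this
    rw [Real.norm_eq_abs]
    nlinarith [abs_nonneg (z i), sq_abs (z i)]
  have hcomp : IsCompact S := Metric.isCompact_of_isClosed_isBounded hclosed hbdd
  obtain ⟨z₀, hz₀S, hmin⟩ := hcomp.exists_isMinOn hSne
    (Continuous.continuousOn (by exact (continuous_bform_self).neg))
  have hz₀ne : z₀ ≠ 0 := by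
    intro h
    rw [h] at hz₀S
    have := hz₀S.1
    simp [dotP] at this
  have hz₀neg : bform p q r z₀ z₀ < 0 := by
    rcases lt_or_eq_of_le (bform_nonpos_of_ortho_iso hr hu huu hz₀S.2.1) with h | h
    · exact h
    · exfalso
      obtain ⟨c, hc⟩ := iso_pair_dependent hr huu
        (by rw [bform_symm]; exact hz₀S.2.1) h hu
      have : dotP p q r z₀ u = c * dotP p q r u u := by rw [hc, dotP_smul_left]
      rw [hz₀S.2.2] at this
      have hQ : 0 < dotP p q r u u := dotP_self_pos hu
      have hc0 : c = 0 := by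
        rcases mul_eq_zero.mp this.symm with h' | h'
        · exact h'
        · exact absurd h' (ne_of_gt hQ)
      rw [hc0, zero_smul] at hc
      exact hz₀ne hc
  refine ⟨- bform p q r z₀ z₀, by linarith, ?_⟩
  intro z hb he
  by_cases hz : z = 0
  · rw [hz]
    simp [dotP, bform_zero_left]
  · have hpos := dotP_self_pos hz
    have hzS := hscale z hz hb he
    have hmin' := (isMinOn_iff.mp hmin) _ hzS
    have hsq : ((Real.sqrt (dotP p q r z z))⁻¹) ^ 2 = (dotP p q r z z)⁻¹ := by
      rw [← Real.sqrt_inv]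
      exact Real.sq_sqrt (by positivity)
    have hexp : bform p q r ((Real.sqrt (dotP p q r z z))⁻¹ • z)
        ((Real.sqrt (dotP p q r z z))⁻¹ • z) = (dotP p q r z z)⁻¹ * bform p q r z z := by
      rw [bform_smul_left, bform_smul_right, ← mul_assoc, ← sq, hsq]
    simp only [Pi.neg_apply] at hmin'
    rw [hexp] at hmin'
    have h3 : (- bform p q r z₀ z₀) * dotP p q r z z ≤
        (-((dotP p q r z z)⁻¹ * bform p q r z z)) * dotP p q r z z :=
      mul_le_mul_of_nonneg_right (by linarith) (le_of_lt hpos)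
    have h4 : (-((dotP p q r z z)⁻¹ * bform p q r z z)) * dotP p q r z z =
        - bform p q r z z := by
      field_simp
    linarith

end SecE

section SecF

variable {p q r : ℕ}

lemma pow_inv_cancel_end (w₀ w₁ : Module.End ℤ (Idx p q r → ℤ))
    (h01 : w₀ * w₁ = 1) (j : ℕ) : w₀ ^ j * w₁ ^ j = 1 := by
  induction j with
  | zero => simp
  | succ j ih =>
      rw [pow_succ w₀ j, pow_succ' w₁ j, mul_assoc (w₀ ^ j) w₀ (w₁ * w₁ ^ j),
        ← mul_assoc w₀ w₁ (w₁ ^ j), h01, one_mul, ih]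

lemma seq_injective (w₀ w₁ : Module.End ℤ (Idx p q r → ℤ))
    (h01 : w₀ * w₁ = 1)
    (hper : ∀ β ∈ rootSet p q r, ∀ k : ℕ, 1 ≤ k → (w₁ ^ k) β ≠ β)
    (α : Idx p q r → ℤ) (hα : α ∈ rootSet p q r) :
    Function.Injective (fun k : ℕ => (w₁ ^ k) α) := by
  have key : ∀ j m : ℕ, j < m → (w₁ ^ j) α = (w₁ ^ m) α → False := by
    intro j m hjm heq
    set d := m - j with hd
    have hm : m = j + d := by omega
    have hd1 : 1 ≤ d := by omega
    rw [hm, pow_add, Module.End.mul_apply] at heq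
    have happ := congrArg (w₀ ^ j) heq
    have hcan : ∀ y : Idx p q r → ℤ, (w₀ ^ j) ((w₁ ^ j) y) = y := by
      intro y
      rw [← Module.End.mul_apply, pow_inv_cancel_end w₀ w₁ h01 j, Module.End.one_apply]
    rw [hcan, hcan] at happ
    exact hper α hα d hd1 happ.symm
  intro j m hjm
  rcases lt_trichotomy j m with h | h | h
  · exact absurd hjm (fun hh => key j m h hh)
  · exact h
  · exact absurd hjm (fun hh => key m j h hh.symm)

set_option maxHeartbeats 1000000 in
lemma core_contradiction (hp : 2 ≤ p) (hq : 2 ≤ q) (hr : 3 ≤ r)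
    (w₀ w₁ : Module.End ℤ (Idx p q r → ℤ))
    (h₀ : w₀ ∈ weylGroup p q r) (h₁ : w₁ ∈ weylGroup p q r)
    (h01 : w₀ * w₁ = 1) (h10 : w₁ * w₀ = 1)
    (hper : ∀ β ∈ rootSet p q r, ∀ k : ℕ, 1 ≤ k → (w₁ ^ k) β ≠ β)
    (ν : ℝ) (hν : 1 < |ν|)
    (u : Idx p q r → ℝ) (hu : u ≠ 0)
    (heu : (matn ℝ p q r w₀).mulVec u = ν • u)
    (α : Idx p q r → ℤ) (hα : α ∈ rootSet p q r)
    (hαu : bform p q r (fun k => ((α k : ℤ) : ℝ)) u = 0) : False := by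
  classical
  set M₀ := matn ℝ p q r w₀ with hM₀
  set M₁ := matn ℝ p q r w₁ with hM₁
  have hM01 : M₀ * M₁ = 1 := by rw [hM₀, hM₁, ← matn_mul, h01, matn_one]
  have hM10 : M₁ * M₀ = 1 := by rw [hM₀, hM₁, ← matn_mul, h10, matn_one]
  have binv₀ := fun x y => weyl_matn_invariant (R := ℝ) hp hq hr h₀ x y
  have hν0 : ν ≠ 0 := by intro h; rw [h] at hν; norm_num at hν
  have hν2 : 1 < ν * ν := by nlinarith [sq_abs ν, hν, abs_nonneg ν]
  -- u is isotropic
  have huu : bform p q r u u = 0 := by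
    have h := binv₀ u u
    rw [heu, bform_smul_left, bform_smul_right] at h
    have : (ν * ν - 1) * bform p q r u u = 0 := by linear_combination h
    rcases mul_eq_zero.mp this with h' | h'
    · exfalso; nlinarith
    · exact h'
  have heu1 : M₁.mulVec u = ν⁻¹ • u := by
    have h : M₁.mulVec (M₀.mulVec u) = u := by
      rw [Matrix.mulVec_mulVec, hM10, Matrix.one_mulVec]
    rw [heu, Matrix.mulVec_smul] at h
    have := congrArg (fun z => ν⁻¹ • z) h
    simp only [smul_smul, inv_mul_cancel₀ hν0, one_smul] at this
    exact this
  -- the integer root sequence and its real castings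
  set βseq : ℕ → (Idx p q r → ℤ) := fun k => (w₁ ^ k) α with hβseq
  have hβroot : ∀ k, βseq k ∈ rootSet p q r := by
    intro k
    exact rootSet_w_mem (pow_mem h₁ k) hα
  set Bseq : ℕ → (Idx p q r → ℝ) := fun k => fun j => ((βseq k j : ℤ) : ℝ) with hBseq
  have hBrec : ∀ k, Bseq (k + 1) = M₁.mulVec (Bseq k) := by
    intro k
    have h1 : βseq (k + 1) = w₁ (βseq k) := by
      rw [hβseq]
      simp only
      rw [pow_succ' w₁ k, Module.End.mul_apply]
    rw [hBseq]
    simp only [h1]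
    rw [hM₁, intCast_vec_mulVec w₁ (βseq k)]
  have hBu : ∀ k, bform p q r (Bseq k) u = 0 := by
    intro k
    induction k with
    | zero => exact hαu
    | succ k ih =>
        rw [hBrec k]
        calc bform p q r (M₁.mulVec (Bseq k)) u
            = bform p q r (M₀.mulVec (M₁.mulVec (Bseq k))) (M₀.mulVec u) :=
              (binv₀ _ _).symm
          _ = bform p q r (Bseq k) (ν • u) := by
              rw [Matrix.mulVec_mulVec, hM01, Matrix.one_mulVec, heu]
          _ = ν * bform p q r (Bseq k) u := bform_smul_right _ _ _
          _ = 0 := by rw [ih, mul_zero]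
  have hB2 : ∀ k, bform p q r (Bseq k) (Bseq k) = (-2 : ℝ) := by
    intro k
    rw [hBseq]
    simp only
    rw [bform_intCast (βseq k) (βseq k), root_bform_self hp hq hr (hβroot k)]
    norm_num
  have hQ : 0 < dotP p q r u u := dotP_self_pos hu
  set Q := dotP p q r u u with hQdef
  set cseq : ℕ → ℝ := fun k => dotP p q r (Bseq k) u / Q with hcseq
  set dseq : ℕ → (Idx p q r → ℝ) := fun k => Bseq k - cseq k • u with hdseq
  have hd_e : ∀ k, dotP p q r (dseq k) u = 0 := by
    intro k
    rw [hdseq]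
    simp only
    rw [dotP_sub_left, dotP_smul_left, hcseq]
    field_simp
    rw [hQdef]; ring
  have hd_b : ∀ k, bform p q r (dseq k) u = 0 := by
    intro k
    rw [hdseq]
    simp only
    rw [bform_sub_left, bform_smul_left, hBu, huu, mul_zero, sub_zero]
  have hd_2 : ∀ k, bform p q r (dseq k) (dseq k) = (-2 : ℝ) := by
    intro k
    rw [hdseq]
    simp only
    rw [bform_sub_left, bform_sub_right, bform_sub_right, bform_smul_left,
      bform_smul_right, bform_smul_left, bform_smul_right, hB2, hBu, huu,
      bform_symm u (Bseq k), hBu]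
    ring
  have hd_ne : ∀ k, dseq k ≠ 0 := by
    intro k h
    have := hd_2 k
    rw [h] at this
    rw [bform_zero_left] at this
    norm_num at this
  obtain ⟨ε, hε, hco⟩ := coercivity hr u hu huu (dseq 0) (hd_ne 0) (hd_b 0) (hd_e 0)
  have hdd_le : ∀ k, dotP p q r (dseq k) (dseq k) ≤ 2 / ε := by
    intro k
    have := hco (dseq k) (hd_b k) (hd_e k)
    rw [hd_2 k] at this
    rw [le_div_iff₀ hε]
    nlinarith [this]
  set EM := ∑ k : Idx p q r, ∑ i : Idx p q r, (M₁ k i) ^ 2 with hEM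
  have hEMnn : 0 ≤ EM := Finset.sum_nonneg fun k _ => Finset.sum_nonneg fun i _ => sq_nonneg _
  set L := Real.sqrt (EM * (2 / ε) * Q) with hL
  have hLnn : 0 ≤ L := Real.sqrt_nonneg _
  have hcd : ∀ k, |dotP p q r (M₁.mulVec (dseq k)) u| ≤ L := by
    intro k
    have h1 : (dotP p q r (M₁.mulVec (dseq k)) u) ^ 2 ≤
        dotP p q r (M₁.mulVec (dseq k)) (M₁.mulVec (dseq k)) * Q := dotP_sq_le _ _
    have h2 : dotP p q r (M₁.mulVec (dseq k)) (M₁.mulVec (dseq k)) ≤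
        EM * dotP p q r (dseq k) (dseq k) := dotP_mulVec_le M₁ (dseq k)
    have h3 : (dotP p q r (M₁.mulVec (dseq k)) u) ^ 2 ≤ EM * (2 / ε) * Q := by
      have h4 : dotP p q r (M₁.mulVec (dseq k)) (M₁.mulVec (dseq k)) * Q ≤
          (EM * dotP p q r (dseq k) (dseq k)) * Q :=
        mul_le_mul_of_nonneg_right h2 (le_of_lt hQ)
      have h5 : EM * dotP p q r (dseq k) (dseq k) ≤ EM * (2 / ε) :=
        mul_le_mul_of_nonneg_left (hdd_le k) hEMnn
      have h6 : (EM * dotP p q r (dseq k) (dseq k)) * Q ≤ (EM * (2 / ε)) * Q :=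
        mul_le_mul_of_nonneg_right h5 (le_of_lt hQ)
      have h7 : (EM * (2 / ε)) * Q = EM * (2 / ε) * Q := by ring
      linarith
    rw [← Real.sqrt_sq_eq_abs]
    exact Real.sqrt_le_sqrt h3
  have hcrec : ∀ k, cseq (k + 1) = ν⁻¹ * cseq k + dotP p q r (M₁.mulVec (dseq k)) u / Q := by
    intro k
    have hBd : Bseq k = cseq k • u + dseq k := by
      rw [hdseq]
      simp only
      abel
    have hnum : dotP p q r (Bseq (k + 1)) u =
        cseq k * (ν⁻¹ * Q) + dotP p q r (M₁.mulVec (dseq k)) u := by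
      rw [hBrec k, hBd, Matrix.mulVec_add, Matrix.mulVec_smul, heu1, dotP_add_left,
        dotP_smul_left, dotP_smul_left]
    have hQne : Q ≠ 0 := ne_of_gt hQ
    show dotP p q r (Bseq (k + 1)) u / Q = _
    rw [hnum, add_div]
    congr 1
    field_simp
  set t := |ν|⁻¹ with ht
  have ht1 : t < 1 := by
    rw [ht]
    exact inv_lt_one_of_one_lt₀ hν
  have ht0 : 0 < t := by
    rw [ht]
    exact inv_pos.mpr (by linarith)
  set L' := L / Q with hL'
  have hL'nn : 0 ≤ L' := div_nonneg hLnn (le_of_lt hQ)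
  set KC := max (|cseq 0|) (L' / (1 - t)) with hKC
  have hKC0 : 0 ≤ KC := le_trans (abs_nonneg _) (le_max_left _ _)
  have hKCL : L' ≤ (1 - t) * KC := by
    have h1 : L' / (1 - t) ≤ KC := le_max_right _ _
    rw [div_le_iff₀ (by linarith)] at h1
    linarith [h1]
  have hcbound : ∀ k, |cseq k| ≤ KC := by
    intro k
    induction k with
    | zero => exact le_max_left _ _
    | succ k ih =>
        rw [hcrec k]
        calc |ν⁻¹ * cseq k + dotP p q r (M₁.mulVec (dseq k)) u / Q|
            ≤ |ν⁻¹ * cseq k| + |dotP p q r (M₁.mulVec (dseq k)) u / Q| := abs_add_le _ _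
          _ ≤ t * |cseq k| + L' := by
              gcongr
              · rw [abs_mul, abs_inv, ht]
              · rw [abs_div, hL', abs_of_pos hQ]
                gcongr
                exact hcd k
          _ ≤ t * KC + L' := by
              have := mul_le_mul_of_nonneg_left ih (le_of_lt ht0)
              linarith
          _ ≤ KC := by
              have hexp : (1 - t) * KC = KC - t * KC := by ring
              linarith [hKCL, hexp]
  -- coordinatewise bound
  set UM := Real.sqrt Q with hUM
  set DM := Real.sqrt (2 / ε) with hDM
  have hKB : ∀ k i, |Bseq k i| ≤ KC * UM + DM := by
    intro k i
    have hBd : Bseq k i = cseq k * u i + dseq k i := by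
      rw [hdseq]
      simp only [Pi.sub_apply, Pi.smul_apply, smul_eq_mul]
      ring
    have hui : |u i| ≤ UM := by
      rw [hUM, ← Real.sqrt_sq_eq_abs]
      refine Real.sqrt_le_sqrt ?_
      have h := sq_coord_le_dotP u i
      rw [← hQdef] at h
      rw [sq]
      exact h
    have hdi : |dseq k i| ≤ DM := by
      rw [hDM, ← Real.sqrt_sq_eq_abs]
      refine Real.sqrt_le_sqrt ?_
      have h := sq_coord_le_dotP (dseq k) i
      rw [sq]
      linarith [hdd_le k]
    rw [hBd]
    calc |cseq k * u i + dseq k i| ≤ |cseq k * u i| + |dseq k i| := abs_add_le _ _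
      _ ≤ KC * UM + DM := by
          rw [abs_mul]
          have h1 : |cseq k| * |u i| ≤ KC * UM :=
            mul_le_mul (hcbound k) hui (abs_nonneg _) hKC0
          linarith [hdi]
  set N : ℤ := ⌈KC * UM + DM⌉ with hN
  have hint : ∀ k i, |βseq k i| ≤ N := by
    intro k i
    have h1 : |(βseq k i : ℝ)| ≤ KC * UM + DM := hKB k i
    have h2 : ((|βseq k i| : ℤ) : ℝ) ≤ (N : ℝ) := by
      rw [Int.cast_abs]
      exact le_trans h1 (Int.le_ceil _)
    exact_mod_cast h2
  have hfin : Set.Finite {g : Idx p q r → ℤ | ∀ i, |g i| ≤ N} := by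
    have hsub : {g : Idx p q r → ℤ | ∀ i, |g i| ≤ N} ⊆
        Set.pi Set.univ (fun _ : Idx p q r => Set.Icc (-N) N) := by
      intro g hg i _
      exact Set.mem_Icc.mpr (abs_le.mp (hg i))
    exact (Set.Finite.pi (fun _ => Set.finite_Icc _ _)).subset hsub
  have hinj := seq_injective w₀ w₁ h01 hper α hα
  have hrange : Set.range (fun k : ℕ => (w₁ ^ k) α) ⊆ {g : Idx p q r → ℤ | ∀ i, |g i| ≤ N} := by
    rintro g ⟨k, rfl⟩
    exact fun i => hint k i
  exact (Set.infinite_range_of_injective hinj) (hfin.subset hrange)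

end SecF

section SecG

variable {p q r : ℕ}

lemma bform_ofReal (x y : Idx p q r → ℝ) :
    bform p q r (fun k => ((x k : ℝ) : ℂ)) (fun k => ((y k : ℝ) : ℂ)) =
      ((bform p q r x y : ℝ) : ℂ) := by
  unfold bform
  push_cast
  rfl

lemma complex_decomp (u : Idx p q r → ℂ) :
    u = (fun k => (((u k).re : ℝ) : ℂ)) + Complex.I • (fun k => (((u k).im : ℝ) : ℂ)) := by
  funext k
  simp only [Pi.add_apply, Pi.smul_apply, smul_eq_mul]
  rw [mul_comm]
  exact (Complex.re_add_im (u k)).symm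

lemma mulVec_matn_complex (w : Module.End ℤ (Idx p q r → ℤ)) (u : Idx p q r → ℂ)
    (k : Idx p q r) :
    ((matn ℂ p q r w).mulVec u k).re = (matn ℝ p q r w).mulVec (fun j => (u j).re) k ∧
    ((matn ℂ p q r w).mulVec u k).im = (matn ℝ p q r w).mulVec (fun j => (u j).im) k := by
  constructor
  · simp only [Matrix.mulVec, dotProduct, matn, Matrix.map_apply]
    rw [Complex.re_sum]
    refine Finset.sum_congr rfl fun j _ => ?_
    rw [show ((LinearMap.toMatrix' w k j : ℤ) : ℂ) =
      (((LinearMap.toMatrix' w k j : ℤ) : ℝ) : ℂ) by push_cast; ring]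
    simp [Complex.mul_re]
  · simp only [Matrix.mulVec, dotProduct, matn, Matrix.map_apply]
    rw [Complex.im_sum]
    refine Finset.sum_congr rfl fun j _ => ?_
    rw [show ((LinearMap.toMatrix' w k j : ℤ) : ℂ) =
      (((LinearMap.toMatrix' w k j : ℤ) : ℝ) : ℂ) by push_cast; ring]
    simp [Complex.mul_im]

/-- reduction of a complex eigenvector with eigenvalue off the unit circle
to a real eigenvector -/
lemma real_eigen_reduction (hp : 2 ≤ p) (hq : 2 ≤ q) (hr : 3 ≤ r)
    {w : Module.End ℤ (Idx p q r → ℤ)} (hw : w ∈ weylGroup p q r)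
    (μ : ℂ) (hμ : ‖μ‖ ≠ 1) (hμ0 : μ ≠ 0)
    (u : Idx p q r → ℂ) (hu : u ≠ 0)
    (heig : (matn ℂ p q r w).mulVec u = μ • u)
    (α : Idx p q r → ℤ) (hbα : bform p q r (fun k => ((α k : ℤ) : ℂ)) u = 0) :
    ∃ (ν : ℝ) (v : Idx p q r → ℝ), |ν| ≠ 1 ∧ ν ≠ 0 ∧ v ≠ 0 ∧
      (matn ℝ p q r w).mulVec v = ν • v ∧
      bform p q r (fun k => ((α k : ℤ) : ℝ)) v = 0 := by
  classical
  set x : Idx p q r → ℝ := fun j => (u j).re with hx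
  set y : Idx p q r → ℝ := fun j => (u j).im with hy
  have hex : (matn ℝ p q r w).mulVec x = μ.re • x - μ.im • y := by
    funext k
    have h1 := (mulVec_matn_complex w u k).1
    rw [congrFun heig k] at h1
    simp only [Pi.smul_apply, smul_eq_mul, Complex.mul_re] at h1
    simp only [Pi.sub_apply, Pi.smul_apply, smul_eq_mul]
    rw [← h1]
  have hey : (matn ℝ p q r w).mulVec y = μ.im • x + μ.re • y := by
    funext k
    have h1 := (mulVec_matn_complex w u k).2
    rw [congrFun heig k] at h1
    simp only [Pi.smul_apply, smul_eq_mul, Complex.mul_im] at h1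
    simp only [Pi.add_apply, Pi.smul_apply, smul_eq_mul]
    rw [← h1]
    ring
  have hinv := fun a b => weyl_matn_invariant (R := ℂ) hp hq hr hw a b
  have hμ2 : μ * μ ≠ 1 := by
    intro h
    have h2 := congrArg norm h
    rw [norm_mul, norm_one] at h2
    rcases lt_trichotomy (‖μ‖) 1 with h' | h' | h'
    · nlinarith [norm_nonneg μ]
    · exact hμ h'
    · nlinarith
  have hμμ : μ * (starRingEnd ℂ) μ ≠ 1 := by
    rw [Complex.mul_conj]
    intro h
    have h2 : Complex.normSq μ = 1 := by exact_mod_cast h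
    have h3 : ‖μ‖ ^ 2 = 1 := by rw [Complex.sq_norm]; exact h2
    have : ‖μ‖ = 1 := by nlinarith [norm_nonneg μ]
    exact hμ this
  have huu : bform p q r u u = 0 := by
    have h := hinv u u
    rw [heig, bform_smul_left, bform_smul_right, ← mul_assoc] at h
    have h2 : (μ * μ - 1) * bform p q r u u = 0 := by linear_combination h
    rcases mul_eq_zero.mp h2 with h' | h'
    · exact absurd (by linear_combination h' : μ * μ = 1) hμ2
    · exact h'
  set ub : Idx p q r → ℂ := fun j => (starRingEnd ℂ) (u j) with hub
  have heigb : (matn ℂ p q r w).mulVec ub = (starRingEnd ℂ) μ • ub := by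
    funext k
    have h1 := congrArg (starRingEnd ℂ) (congrFun heig k)
    have h2 : (starRingEnd ℂ) ((matn ℂ p q r w).mulVec u k) =
        (matn ℂ p q r w).mulVec ub k := by
      simp only [Matrix.mulVec, dotProduct, map_sum, _root_.map_mul]
      refine Finset.sum_congr rfl fun j _ => ?_
      congr 1
      simp [matn, Matrix.map_apply]
    have h3 : (starRingEnd ℂ) ((μ • u) k) = ((starRingEnd ℂ) μ • ub) k := by
      simp [hub, _root_.map_mul]
    rw [h2, h3] at h1
    exact h1
  have huub : bform p q r u ub = 0 := by
    have h := hinv u ub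
    rw [heig, heigb, bform_smul_left, bform_smul_right, ← mul_assoc] at h
    have h2 : (μ * (starRingEnd ℂ) μ - 1) * bform p q r u ub = 0 := by linear_combination h
    rcases mul_eq_zero.mp h2 with h' | h'
    · exact absurd (by linear_combination h' : μ * (starRingEnd ℂ) μ = 1) hμμ
    · exact h'
  -- translate to real bforms
  have hdecomp : u = (fun k => ((x k : ℝ) : ℂ)) + Complex.I • (fun k => ((y k : ℝ) : ℂ)) :=
    complex_decomp u
  have hdecompb : ub = (fun k => ((x k : ℝ) : ℂ)) - Complex.I • (fun k => ((y k : ℝ) : ℂ)) := by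
    funext k
    simp only [hub, Pi.sub_apply, Pi.smul_apply, smul_eq_mul]
    apply Complex.ext <;> simp [hx, hy]
  set A := bform p q r x x with hA
  set B := bform p q r y y with hB
  set C := bform p q r x y with hC
  have e1 : bform p q r u u = ((A - B : ℝ) : ℂ) + ((2 * C : ℝ) : ℂ) * Complex.I := by
    rw [hdecomp, bform_add_left, bform_add_right, bform_add_right, bform_smul_left,
      bform_smul_right, bform_smul_left, bform_smul_right, bform_ofReal, bform_ofReal,
      bform_ofReal, bform_ofReal, bform_symm y x, hA, hB, hC]
    push_cast
    linear_combination ((bform p q r y y : ℝ) : ℂ) * Complex.I_mul_I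
  have e2 : bform p q r u ub = ((A + B : ℝ) : ℂ) := by
    rw [hdecomp, hdecompb, bform_add_left, bform_sub_right, bform_sub_right,
      bform_smul_left, bform_smul_right, bform_smul_left, bform_smul_right,
      bform_ofReal, bform_ofReal, bform_ofReal, bform_ofReal, bform_symm y x, hA, hB]
    push_cast
    linear_combination (-((bform p q r y y : ℝ) : ℂ)) * Complex.I_mul_I
  have hAB : A - B = 0 ∧ 2 * C = 0 := by
    rw [e1] at huu
    constructor
    · have := congrArg Complex.re huu
      simpa using this
    · have := congrArg Complex.im huu
      simpa using this
  have hAB2 : A + B = 0 := by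
    rw [e2] at huub
    exact_mod_cast huub
  have hA0 : A = 0 := by linarith [hAB.1, hAB2]
  have hB0 : B = 0 := by linarith [hAB.1, hAB2]
  have hC0 : C = 0 := by linarith [hAB.2]
  -- the pairing with α
  have e3 : bform p q r (fun k => ((α k : ℤ) : ℂ)) u =
      ((bform p q r (fun k => ((α k : ℤ) : ℝ)) x : ℝ) : ℂ) +
      ((bform p q r (fun k => ((α k : ℤ) : ℝ)) y : ℝ) : ℂ) * Complex.I := by
    have hαc : (fun k => ((α k : ℤ) : ℂ)) =
        (fun k => (((fun k' => ((α k' : ℤ) : ℝ)) k : ℝ) : ℂ)) := by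
      funext k
      push_cast
      rfl
    rw [hαc, hdecomp, bform_add_right, bform_smul_right, bform_ofReal, bform_ofReal]
    ring
  have hαx : bform p q r (fun k => ((α k : ℤ) : ℝ)) x = 0 ∧
      bform p q r (fun k => ((α k : ℤ) : ℝ)) y = 0 := by
    rw [e3] at hbα
    constructor
    · have := congrArg Complex.re hbα
      simpa using this
    · have := congrArg Complex.im hbα
      simpa using this
  -- case on μ.im
  by_cases hIm : μ.im = 0
  · -- real eigenvalue
    have hμre : μ = ((μ.re : ℝ) : ℂ) := by
      apply Complex.ext
      · simp
      · simp [hIm]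
    have hνabs : |μ.re| = ‖μ‖ := by
      rw [hμre]
      exact (Complex.norm_real _).symm
    have hν1 : |μ.re| ≠ 1 := by rw [hνabs]; exact hμ
    have hν0 : μ.re ≠ 0 := by
      intro h
      apply hμ0
      rw [hμre, h]
      simp
    have hex' : (matn ℝ p q r w).mulVec x = μ.re • x := by
      rw [hex, hIm, zero_smul, sub_zero]
    have hey' : (matn ℝ p q r w).mulVec y = μ.re • y := by
      rw [hey, hIm, zero_smul, zero_add]
    by_cases hxz : x = 0
    · have hyz : y ≠ 0 := by
        intro h
        apply hu
        rw [hdecomp, hxz, h]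
        funext k
        simp
      exact ⟨μ.re, y, hν1, hν0, hyz, hey', hαx.2⟩
    · exact ⟨μ.re, x, hν1, hν0, hxz, hex', hαx.1⟩
  · -- non-real eigenvalue: contradiction
    exfalso
    have hxz : x ≠ 0 := by
      intro h
      have h1 : μ.im • y = 0 := by
        have h2 := hex
        rw [h, Matrix.mulVec_zero, smul_zero, zero_sub] at h2
        exact neg_eq_zero.mp h2.symm
      rcases smul_eq_zero.mp h1 with h' | h'
      · exact hIm h'
      · apply hu
        rw [hdecomp, h, h']
        funext k
        simp
    obtain ⟨c, hc⟩ := iso_pair_dependent hr hA0 hC0 hB0 hxz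
    have hco : ∀ a b : ℝ, a • x = b • x → a = b := by
      intro a b hab
      have : (a - b) • x = 0 := by rw [sub_smul, hab, sub_self]
      rcases smul_eq_zero.mp this with h' | h'
      · exact sub_eq_zero.mp h'
      · exact absurd h' hxz
    have hl : (matn ℝ p q r w).mulVec y = (c * μ.re - c * c * μ.im) • x := by
      rw [hc, Matrix.mulVec_smul, hex, hc]
      funext k
      simp only [Pi.smul_apply, Pi.sub_apply, smul_eq_mul]
      ring
    have hrr : (matn ℝ p q r w).mulVec y = (μ.im + μ.re * c) • x := by
      rw [hey, hc]
      funext k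
      simp only [Pi.smul_apply, Pi.add_apply, smul_eq_mul]
      ring
    have heq : c * μ.re - c * c * μ.im = μ.im + μ.re * c := hco _ _ (by rw [← hl, hrr])
    have : μ.im * (c * c + 1) = 0 := by linarith [heq]
    rcases mul_eq_zero.mp this with h' | h'
    · exact hIm h'
    · nlinarith [sq_nonneg c]

end SecG

section SecH

variable {p q r : ℕ}

lemma kernel_descent {m n : Type*} [Fintype m] [Fintype n] [DecidableEq m] [DecidableEq n]
    {K : Type*} [Field K] (B : Matrix m n K) (ι : K →+* ℂ)
    (z : n → ℂ) (hz : z ≠ 0) (h : (B.map ι).mulVec z = 0) :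
    ∃ z' : n → K, z' ≠ 0 ∧ B.mulVec z' = 0 := by
  by_contra hcon
  push_neg at hcon
  have hker : LinearMap.ker (Matrix.toLin' B) = ⊥ := by
    rw [LinearMap.ker_eq_bot']
    intro v hv
    rw [Matrix.toLin'_apply] at hv
    by_contra hvne
    exact hcon v hvne hv
  obtain ⟨g, hg⟩ := LinearMap.exists_leftInverse_of_injective _ hker
  have hmat : (LinearMap.toMatrix' g) * B = 1 := by
    have h1 : LinearMap.toMatrix' (g ∘ₗ Matrix.toLin' B) = 1 := by
      rw [hg, LinearMap.toMatrix'_id]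
    rw [LinearMap.toMatrix'_comp, LinearMap.toMatrix'_toLin'] at h1
    exact h1
  have hC : ((LinearMap.toMatrix' g).map ι) * (B.map ι) = 1 := by
    rw [← Matrix.map_mul, hmat]
    exact Matrix.map_one _ (map_zero ι) (map_one ι)
  have hz0 : z = 0 := by
    calc z = (1 : Matrix n n ℂ).mulVec z := (Matrix.one_mulVec z).symm
      _ = (((LinearMap.toMatrix' g).map ι) * (B.map ι)).mulVec z := by rw [hC]
      _ = ((LinearMap.toMatrix' g).map ι).mulVec ((B.map ι).mulVec z) :=
          (Matrix.mulVec_mulVec z _ _).symm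
      _ = 0 := by rw [h, Matrix.mulVec_zero]
  exact hz hz0

lemma eigen_conjugate (w : Module.End ℤ (Idx p q r → ℤ))
    (lam : ℂ) (hint : IsIntegral ℤ lam)
    (hlam_ru : ¬ ∃ k : ℕ, 1 ≤ k ∧ lam ^ k = 1) (hlam0 : lam ≠ 0)
    (v : Idx p q r → ℂ) (hv : v ≠ 0)
    (heig : (matn ℂ p q r w).mulVec v = lam • v)
    (α : Idx p q r → ℤ)
    (hb : bform p q r (fun k => ((α k : ℤ) : ℂ)) v = 0) :
    ∃ (μ : ℂ) (u : Idx p q r → ℂ), ‖μ‖ ≠ 1 ∧ μ ≠ 0 ∧ u ≠ 0 ∧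
      (matn ℂ p q r w).mulVec u = μ • u ∧
      bform p q r (fun k => ((α k : ℤ) : ℂ)) u = 0 := by
  classical
  set K := IntermediateField.adjoin ℚ ({lam} : Set ℂ) with hK
  have hintQ : IsIntegral ℚ lam := hint.tower_top
  haveI : FiniteDimensional ℚ K := IntermediateField.adjoin.finiteDimensional hintQ
  haveI : NumberField K := ⟨⟩
  set lamK : K := ⟨lam, IntermediateField.mem_adjoin_simple_self ℚ lam⟩ with hlamK
  set ι : K →+* ℂ := algebraMap K ℂ with hι
  have hιlam : ι lamK = lam := rfl
  have hintK : IsIntegral ℤ lamK := by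
    have hinj : Function.Injective (algebraMap K ℂ) := (algebraMap K ℂ).injective
    exact (isIntegral_algebraMap_iff hinj).mp (by rw [show (algebraMap K ℂ) lamK = lam from rfl]; exact hint)
  have hσex : ∃ σ : K →+* ℂ, ‖σ lamK‖ ≠ 1 := by
    by_contra hcon
    push_neg at hcon
    obtain ⟨n, hn0, hpow⟩ :=
      NumberField.Embeddings.pow_eq_one_of_norm_eq_one K ℂ hintK hcon
    refine hlam_ru ⟨n, hn0, ?_⟩
    have := congrArg ι (hpow)
    rw [map_pow, _root_.map_one, hιlam] at this
    exact this
  obtain ⟨σ, hσ⟩ := hσex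
  set A := LinearMap.toMatrix' w with hA
  set B : Matrix (Idx p q r ⊕ Unit) (Idx p q r) K := Matrix.of fun s j =>
    Sum.elim (fun k => ((A k j : ℤ) : K) - if k = j then lamK else 0)
      (fun _ => ∑ i : Idx p q r, ((α i : ℤ) : K) * ((gram p q r i j : ℤ) : K)) s with hB
  -- the given eigenvector witnesses the complex kernel
  have hwit : (B.map ι).mulVec v = 0 := by
    funext s
    rcases s with k | s
    · have hrow : ∀ j, (B.map ι) (Sum.inl k) j =
          ((A k j : ℤ) : ℂ) - (if k = j then lam else 0) := by
        intro j
        simp only [Matrix.map_apply, hB, Matrix.of_apply, Sum.elim_inl, map_sub, map_intCast]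
        congr 1
        split <;> simp [hιlam]
      simp only [Matrix.mulVec, dotProduct]
      rw [Finset.sum_congr rfl (fun j _ => by rw [hrow j])]
      simp only [sub_mul, Finset.sum_sub_distrib, Pi.zero_apply]
      have h1 : ∑ j : Idx p q r, ((A k j : ℤ) : ℂ) * v j = lam * v k := by
        have := congrFun heig k
        simp only [Matrix.mulVec, dotProduct, matn, Matrix.map_apply,
          Pi.smul_apply, smul_eq_mul] at this
        exact this
      have h2 : ∑ j : Idx p q r, (if k = j then lam else 0) * v j = lam * v k := by
        rw [Finset.sum_congr rfl (fun j _ => by rw [ite_mul, zero_mul])]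
        rw [Finset.sum_ite_eq]
        simp
      rw [h1, h2, sub_self]
    · simp only [Matrix.mulVec, dotProduct]
      have hrow : ∀ j, (B.map ι) (Sum.inr s) j =
          ∑ i : Idx p q r, ((α i : ℤ) : ℂ) * ((gram p q r i j : ℤ) : ℂ) := by
        intro j
        simp only [Matrix.map_apply, hB, Matrix.of_apply, Sum.elim_inr, map_sum,
          _root_.map_mul, map_intCast]
      rw [Finset.sum_congr rfl (fun j _ => by rw [hrow j])]
      have hswap : ∑ j : Idx p q r,
          (∑ i : Idx p q r, ((α i : ℤ) : ℂ) * ((gram p q r i j : ℤ) : ℂ)) * v j =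
          bform p q r (fun k => ((α k : ℤ) : ℂ)) v := by
        unfold bform
        rw [Finset.sum_comm]
        refine Finset.sum_congr rfl fun j _ => ?_
        rw [Finset.sum_mul]
        refine Finset.sum_congr rfl fun i _ => ?_
        ring
      rw [hswap, hb]
      rfl
  obtain ⟨v', hv'ne, hv'ker⟩ := kernel_descent B ι v hv hwit
  set u : Idx p q r → ℂ := fun i => σ (v' i) with hu
  have hrowK : ∀ k : Idx p q r,
      ∑ j : Idx p q r, ((A k j : ℤ) : K) * v' j = lamK * v' k := by
    intro k
    have := congrFun hv'ker (Sum.inl k)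
    simp only [Matrix.mulVec, dotProduct, hB, Matrix.of_apply, Sum.elim_inl,
      Pi.zero_apply] at this
    have h2 : ∑ j : Idx p q r, (if k = j then lamK else 0) * v' j = lamK * v' k := by
      rw [Finset.sum_congr rfl (fun j _ => by rw [ite_mul, zero_mul])]
      rw [Finset.sum_ite_eq]
      simp
    rw [Finset.sum_congr rfl (fun j _ => sub_mul _ _ _), Finset.sum_sub_distrib, h2] at this
    linear_combination this
  have hrowB : ∑ j : Idx p q r,
      (∑ i : Idx p q r, ((α i : ℤ) : K) * ((gram p q r i j : ℤ) : K)) * v' j = 0 := by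
    have := congrFun hv'ker (Sum.inr ())
    simp only [Matrix.mulVec, dotProduct, hB, Matrix.of_apply, Sum.elim_inr,
      Pi.zero_apply] at this
    exact this
  refine ⟨σ lamK, u, ?_, ?_, ?_, ?_, ?_⟩
  · exact hσ
  · intro h
    have : lamK = 0 := by
      apply σ.injective
      rw [h, map_zero]
    apply hlam0
    rw [← hιlam, this, map_zero]
  · intro h
    apply hv'ne
    funext i
    have := congrFun h i
    rw [hu] at this
    simp only at this
    exact σ.injective (by rw [this]; simp)
  · funext k
    have := congrArg σ (hrowK k)
    rw [map_sum, _root_.map_mul] at this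
    simp only [Matrix.mulVec, dotProduct, matn, Matrix.map_apply, Pi.smul_apply,
      smul_eq_mul]
    rw [← this]
    refine Finset.sum_congr rfl fun j _ => ?_
    rw [_root_.map_mul, map_intCast]
  · have := congrArg σ hrowB
    rw [map_sum, map_zero] at this
    unfold bform
    rw [Finset.sum_comm]
    calc ∑ j : Idx p q r, ∑ i : Idx p q r,
          ((α i : ℤ) : ℂ) * u j * ((gram p q r i j : ℤ) : ℂ)
        = ∑ j : Idx p q r, σ ((∑ i : Idx p q r,
            ((α i : ℤ) : K) * ((gram p q r i j : ℤ) : K)) * v' j) := by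
          refine Finset.sum_congr rfl fun j _ => ?_
          rw [_root_.map_mul, map_sum, Finset.sum_mul]
          refine Finset.sum_congr rfl fun i _ => ?_
          rw [_root_.map_mul, map_intCast, map_intCast]
          ring
      _ = 0 := this

end SecH

section SecI

variable {p q r : ℕ}

lemma scalar_mulVec (lam : ℂ) (v : Idx p q r → ℂ) :
    (Matrix.scalar (Idx p q r) lam).mulVec v = lam • v := by
  funext k
  simp only [Matrix.scalar_apply, Matrix.mulVec, dotProduct, Matrix.diagonal_apply,
    Pi.smul_apply, smul_eq_mul]
  rw [Finset.sum_congr rfl (fun j _ => by rw [ite_mul, zero_mul])]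
  rw [Finset.sum_ite_eq]
  simp

lemma lam_is_integral (w : Module.End ℤ (Idx p q r → ℤ)) (lam : ℂ)
    (v : Idx p q r → ℂ) (hv : v ≠ 0)
    (heig : (matn ℂ p q r w).mulVec v = lam • v) : IsIntegral ℤ lam := by
  classical
  set Mc := matn ℂ p q r w with hMc
  have hdet : (Matrix.scalar (Idx p q r) lam - Mc).det = 0 := by
    rw [← Matrix.exists_mulVec_eq_zero_iff]
    refine ⟨v, hv, ?_⟩
    rw [Matrix.sub_mulVec, scalar_mulVec, heig, sub_self]
  have heval : Polynomial.eval lam Mc.charpoly = 0 := by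
    rw [Matrix.charpoly, eval_det, Matrix.matPolyEquiv_charmatrix]
    rw [Polynomial.eval_sub, Polynomial.eval_X, Polynomial.eval_C]
    exact hdet
  refine ⟨(LinearMap.toMatrix' w).charpoly, Matrix.charpoly_monic _, ?_⟩
  rw [Polynomial.eval₂_eq_eval_map]
  have hmap : ((LinearMap.toMatrix' w).charpoly).map (algebraMap ℤ ℂ) = Mc.charpoly := by
    rw [algebraMap_int_eq, ← Matrix.charpoly_map]
    rfl
  rw [hmap]
  exact heval

end SecI

theorem stmt_12' (p q r : ℕ) (hp : 2 ≤ p) (hq : 2 ≤ q) (hr : 3 ≤ r)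
    (w : Module.End ℤ (Idx p q r → ℤ)) (hw : w ∈ weylGroup p q r)
    (hper : ¬ ∃ α ∈ rootSet p q r, ∃ k : ℕ, 1 ≤ k ∧ (w ^ k) α = α)
    (lam : ℂ) (hlam : ¬ ∃ k : ℕ, 1 ≤ k ∧ lam ^ k = 1)
    (v : Idx p q r → ℂ) (hv : v ≠ 0)
    (heig : (matC p q r w).mulVec v = lam • v) :
    ∀ α ∈ rootSet p q r, bform p q r (fun k => ((α k : ℤ) : ℂ)) v ≠ 0 := by
  classical
  intro α hα hbf
  rw [matC_eq_matn] at heig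
  push_neg at hper
  have hperW : ∀ β ∈ rootSet p q r, ∀ k : ℕ, 1 ≤ k → (w ^ k) β ≠ β := hper
  obtain ⟨winv, hwinv, h01, h10⟩ := weyl_inverse hp hq hr hw
  have hperWinv : ∀ β ∈ rootSet p q r, ∀ k : ℕ, 1 ≤ k → (winv ^ k) β ≠ β := by
    intro β hβ k hk heq
    apply hperW β hβ k hk
    have h1 := congrArg (fun z => (w ^ k) z) heq
    rw [← Module.End.mul_apply, pow_inv_cancel_end w winv h01 k, Module.End.one_apply] at h1
    exact h1.symm
  -- lam ≠ 0
  have hlam0 : lam ≠ 0 := by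
    intro h
    apply hv
    have h1 : matn ℂ p q r winv * matn ℂ p q r w = 1 := by
      rw [← matn_mul, h10, matn_one]
    calc v = ((1 : Matrix (Idx p q r) (Idx p q r) ℂ)).mulVec v := (Matrix.one_mulVec v).symm
      _ = (matn ℂ p q r winv).mulVec ((matn ℂ p q r w).mulVec v) := by
          rw [Matrix.mulVec_mulVec, h1]
      _ = 0 := by rw [heig, h, zero_smul, Matrix.mulVec_zero]
  have hint : IsIntegral ℤ lam := lam_is_integral w lam v hv heig
  obtain ⟨μ, u, hμ1, hμ0, hune, heigu, hbu⟩ :=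
    eigen_conjugate w lam hint hlam hlam0 v hv heig α hbf
  obtain ⟨ν, vR, hν1, hν0, hvRne, heigR, hbR⟩ :=
    real_eigen_reduction hp hq hr hw μ hμ1 hμ0 u hune heigu α hbu
  by_cases hlt : 1 < |ν|
  · exact core_contradiction hp hq hr w winv hw hwinv h01 h10 hperWinv ν hlt vR hvRne
      heigR α hα hbR
  · push_neg at hlt
    have hltlt : |ν| < 1 := lt_of_le_of_ne hlt hν1
    have hM10R : matn ℝ p q r winv * matn ℝ p q r w = 1 := by
      rw [← matn_mul, h10, matn_one]
    have heigR' : (matn ℝ p q r winv).mulVec vR = ν⁻¹ • vR := by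
      have h : (matn ℝ p q r winv).mulVec ((matn ℝ p q r w).mulVec vR) = vR := by
        rw [Matrix.mulVec_mulVec, hM10R, Matrix.one_mulVec]
      rw [heigR, Matrix.mulVec_smul] at h
      have h2 := congrArg (fun z => ν⁻¹ • z) h
      simp only [smul_smul, inv_mul_cancel₀ hν0, one_smul] at h2
      exact h2
    have hinv1 : 1 < |ν⁻¹| := by
      rw [abs_inv]
      have habs : 0 < |ν| := abs_pos.mpr hν0
      rw [lt_inv_comm₀]
      · simpa using hltlt
      · norm_num
      · exact habs
    exact core_contradiction hp hq hr winv w hwinv hw h10 h01 hperW (ν⁻¹) hinv1 vR hvRne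
      heigR' α hα hbR
/-- Proposition 2.4(2): if `w ∈ W(T_{p,q,r})` has no periodic roots and
`v ∈ Λ_n ⊗ ℂ` is an eigenvector of `w` with eigenvalue `λ` not a root of unity, then
`α·v ≠ 0` for every root `α ∈ Δ_n`. -/
theorem stmt_12 (p q r : ℕ) (hp : 2 ≤ p) (hq : 2 ≤ q) (hr : 3 ≤ r)
    (w : Module.End ℤ (Idx p q r → ℤ)) (hw : w ∈ weylGroup p q r)
    (hper : ¬ ∃ α ∈ rootSet p q r, ∃ k : ℕ, 1 ≤ k ∧ (w ^ k) α = α)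
    (lam : ℂ) (hlam : ¬ ∃ k : ℕ, 1 ≤ k ∧ lam ^ k = 1)
    (v : Idx p q r → ℂ) (hv : v ≠ 0)
    (heig : (matC p q r w).mulVec v = lam • v) :
    ∀ α ∈ rootSet p q r, bform p q r (fun k => ((α k : ℤ) : ℂ)) v ≠ 0 := by
  exact stmt_12' p q r hp hq hr w hw hper lam hlam v hv heig
end
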